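/- arXiv:2510.15328 — 13 statements merged into one kernel-verified Lean document; each statement's English description precedes it below -/
import Mathlib

section
/- Let A be a (not necessarily associative) algebra over a field K with two bilinear products ⋆ and ∘ satisfying, for all u,v,w ∈ A: (1) (u⋆v)⋆w − u⋆(v⋆w) = −((v∘u)⋆w + v⋆(u⋆w)); (2) (u⋆v)∘w − u⋆(v∘w) = −((v∘u)∘w − v∘(u∘w)); (3) u∘(v∘w) = −u∘(v⋆w) (a pre-left Leibniz algebra). Then the product u•v := u⋆v + v∘u makes A a left Leibniz algebra, i.e., u•(v•w) = (u•v)•w + v•(u•w) for all u,v,w. -/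
/-!
Writing `u • v = u ⋆ v + v ∘ u` and expanding both sides of the left Leibniz identity
bilinearly, the difference of the two sides is a signed sum of instances of the three
pre-left Leibniz axioms, namely `-(1)(u,v,w) - (2)(u,w,v) + (2)(v,w,u) - (3)(w,u,v)`.
-/

theorem leibniz_add_flip_of_preLeibniz {R A : Type*} [CommSemiring R] [AddCommGroup A]
    [Module R A] (starP circP : A →ₗ[R] A →ₗ[R] A)
    (h1 : ∀ u v w : A,
      starP (starP u v) w - starP u (starP v w)
        = -(starP (circP v u) w + starP v (starP u w)))
    (h2 : ∀ u v w : A,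
      circP (starP u v) w - starP u (circP v w)
        = -(circP (circP v u) w - circP v (circP u w)))
    (h3 : ∀ u v w : A, circP u (circP v w) = -(circP u (starP v w)))
    (u v w : A) :
    (starP + circP.flip) u ((starP + circP.flip) v w)
      = (starP + circP.flip) ((starP + circP.flip) u v) w
        + (starP + circP.flip) v ((starP + circP.flip) u w) := by
  simp only [LinearMap.add_apply, LinearMap.flip_apply, map_add]
  linear_combination (norm := abel) -(h1 u v w) - (h2 u w v) + (h2 v w u) - (h3 w u v)

/-- A pre-left Leibniz algebra gives a left Leibniz algebra via u•v = u⋆v + v∘u. -/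
theorem preLeibniz_gives_leftLeibniz
    {K A : Type*} [Field K] [AddCommGroup A] [Module K A]
    (starP circP : A →ₗ[K] A →ₗ[K] A)
    (h1 : ∀ u v w : A,
      starP (starP u v) w - starP u (starP v w)
        = -(starP (circP v u) w + starP v (starP u w)))
    (h2 : ∀ u v w : A,
      circP (starP u v) w - starP u (circP v w)
        = -(circP (circP v u) w - circP v (circP u w)))
    (h3 : ∀ u v w : A, circP u (circP v w) = -(circP u (starP v w))) :
    ∀ u v w : A,
      starP u (starP v w + circP w v) + circP (starP v w + circP w v) u
        = (starP (starP u v + circP v u) w + circP w (starP u v + circP v u))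
          + (starP v (starP u w + circP w u) + circP (starP u w + circP w u) v) :=
  leibniz_add_flip_of_preLeibniz starP circP h1 h2 h3
end

section
/- Let (A, •, ⟨ , ⟩) be a pseudo-Euclidean left Leibniz algebra with Levi-Civita products (⋆, ∘). Then the three curvature tensors K₁(u,v) := L⋆_{u•v} − [L⋆_u, L⋆_v], K₂(u,v) := −L∘_{u•v} + L⋆_u∘L∘_v + L∘_v∘L∘_u, K₃(u,v) := L∘_{u•v} − [L⋆_u, L∘_v] all vanish if and only if for all u,v ∈ A: L⋆_{u•v} = [L⋆_u, L⋆_v] and L⋆_u∘L⋆_v = −L⋆_u∘L∘_v = −L∘_u∘L⋆_v = L∘_u∘L∘_v. -/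
/-!
For the Levi-Civita products, `L∘_u` is the `⟨ , ⟩`-adjoint of `L⋆_u` (and, the form being
symmetric, conversely), and a nondegenerate form admits at most one adjoint of a given operator.
Taking adjoints therefore turns one curvature identity into another: the adjoint of `K₂ = 0`
compared with `K₁ = 0` gives `L⋆_v L∘_u = -L⋆_v L⋆_u`, the difference of `K₂ = 0` and `K₃ = 0`
gives `L∘_v L∘_u = -L∘_v L⋆_u`, and its adjoint gives `L∘_u L⋆_v = -L⋆_u L⋆_v`. Conversely, the
adjoint of `K₁ = 0` together with `L∘_u L∘_v = L⋆_u L⋆_v` yields `L∘_{u•v} = -L⋆_{u•v}`, from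
which `K₂ = K₃ = 0` is a rearrangement.
-/

namespace LinearMap.IsAdjointPair

variable {R M M₁ M₂ : Type*} [CommRing R] [AddCommGroup M] [Module R M]
  [AddCommGroup M₁] [Module R M₁] [AddCommGroup M₂] [Module R M₂]
  {B : M →ₗ[R] M →ₗ[R] M₂} {B' : M₁ →ₗ[R] M₁ →ₗ[R] M₂} {f : M → M₁}

theorem neg {g : M₁ → M} (h : IsAdjointPair B B' f g) : IsAdjointPair B B' (-f) (-g) :=
  fun x y => by simp [h x y]

theorem eq_of_separatingRight {g g' : M₁ →ₗ[R] M} (hB : B.SeparatingRight)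
    (h : IsAdjointPair B B' f g) (h' : IsAdjointPair B B' f g') : g = g' :=
  LinearMap.ext fun y => sub_eq_zero.1 <| hB _ fun x => by rw [map_sub, ← h, ← h', sub_self]

theorem symm {B : M →ₗ[R] M →ₗ[R] R} {f g : M → M} (hB : B.IsSymm)
    (h : IsAdjointPair B B f g) : IsAdjointPair B B g f := fun x y => by
  rw [← hB.eq y, ← h, hB.eq]

end LinearMap.IsAdjointPair

open LinearMap

section LeviCivita

variable {K A : Type*} [CommRing K] [AddCommGroup A] [Module K A] {B : A →ₗ[K] A →ₗ[K] K}
  {mul starP circP : A →ₗ[K] A →ₗ[K] A}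

theorem comp_identities_of_flat (hB : B.SeparatingRight)
    (hadj : ∀ u, IsAdjointPair B B (starP u) (circP u))
    (hadj' : ∀ u, IsAdjointPair B B (circP u) (starP u))
    (h₁ : ∀ u v : A, starP (mul u v) = starP u ∘ₗ starP v - starP v ∘ₗ starP u)
    (h₂ : ∀ u v : A, circP (mul u v) = starP u ∘ₗ circP v + circP v ∘ₗ circP u)
    (h₃ : ∀ u v : A, circP (mul u v) = starP u ∘ₗ circP v - circP v ∘ₗ starP u) :
    ∀ u v : A,
      starP u ∘ₗ starP v = -(starP u ∘ₗ circP v) ∧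
      starP u ∘ₗ starP v = -(circP u ∘ₗ starP v) ∧
      starP u ∘ₗ starP v = circP u ∘ₗ circP v := by
  have circ_circ : ∀ u v : A, circP v ∘ₗ circP u = -(circP v ∘ₗ starP u) := fun u v => by
    have h := (h₂ u v).symm.trans (h₃ u v)
    rw [sub_eq_add_neg] at h
    exact add_left_cancel h
  have star_circ : ∀ u v : A, starP v ∘ₗ circP u = -(starP v ∘ₗ starP u) := fun u v => by
    have h : starP (mul u v) = starP v ∘ₗ circP u + starP u ∘ₗ starP v :=
      (hadj' _).eq_of_separatingRight hB <| by
        rw [h₂ u v]; exact ((hadj u).mul (hadj' v)).add ((hadj' v).mul (hadj' u))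
    rw [h₁ u v] at h
    linear_combination (norm := abel) -h
  have circ_star : ∀ u v : A, starP u ∘ₗ starP v = -(circP u ∘ₗ starP v) := fun u v =>
    ((hadj' v).mul (hadj' u)).eq_of_separatingRight hB <| by
      rw [Module.End.mul_eq_comp, circ_circ u v]; exact ((hadj' v).mul (hadj u)).neg
  intro u v
  refine ⟨by rw [star_circ v u, neg_neg], circ_star u v, ?_⟩
  rw [circ_circ v u]
  exact circ_star u v

theorem circ_mul_eq_neg_star_mul (hB : B.SeparatingRight)
    (hadj : ∀ u, IsAdjointPair B B (starP u) (circP u))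
    (h₁ : ∀ u v : A, starP (mul u v) = starP u ∘ₗ starP v - starP v ∘ₗ starP u)
    (h₄ : ∀ u v : A, starP u ∘ₗ starP v = circP u ∘ₗ circP v) (u v : A) :
    circP (mul u v) = -starP (mul u v) :=
  (hadj _).eq_of_separatingRight hB <| by
    have h : IsAdjointPair B B ⇑(starP u ∘ₗ starP v - starP v ∘ₗ starP u)
        ⇑(circP v ∘ₗ circP u - circP u ∘ₗ circP v) :=
      ((hadj u).mul (hadj v)).sub ((hadj v).mul (hadj u))
    rwa [← h₄, ← h₄, ← h₁ u v, ← neg_sub, ← h₁ u v] at h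

theorem flat_of_comp_identities (hB : B.SeparatingRight)
    (hadj : ∀ u, IsAdjointPair B B (starP u) (circP u))
    (h₁ : ∀ u v : A, starP (mul u v) = starP u ∘ₗ starP v - starP v ∘ₗ starP u)
    (h₄ : ∀ u v : A,
      starP u ∘ₗ starP v = -(starP u ∘ₗ circP v) ∧
      starP u ∘ₗ starP v = -(circP u ∘ₗ starP v) ∧
      starP u ∘ₗ starP v = circP u ∘ₗ circP v) :
    (∀ u v : A, circP (mul u v) = starP u ∘ₗ circP v + circP v ∘ₗ circP u) ∧
    (∀ u v : A, circP (mul u v) = starP u ∘ₗ circP v - circP v ∘ₗ starP u) := by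
  have circ_mul := circ_mul_eq_neg_star_mul hB hadj h₁ fun u v => (h₄ u v).2.2
  have star_circ : ∀ u v : A, starP u ∘ₗ circP v = -(starP u ∘ₗ starP v) := fun u v => by
    rw [(h₄ u v).1, neg_neg]
  have circ_star : ∀ u v : A, circP u ∘ₗ starP v = -(starP u ∘ₗ starP v) := fun u v => by
    rw [(h₄ u v).2.1, neg_neg]
  refine ⟨fun u v => ?_, fun u v => ?_⟩
  · rw [circ_mul, h₁, star_circ, ← (h₄ v u).2.2]; abel
  · rw [circ_mul, h₁, star_circ, circ_star]; abel

end LeviCivita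

theorem flat_iff_operator_identities_general
    {K A : Type*} [Field K] [AddCommGroup A] [Module K A]
    (mul starP circP : A →ₗ[K] A →ₗ[K] A)
    (B : A →ₗ[K] A →ₗ[K] K)
    (hsymm : ∀ u v : A, B u v = B v u)
    (hnd : ∀ v : A, (∀ u : A, B u v = 0) → v = 0)
    (hcomp : ∀ u v w : A, B (starP u v) w = B v (circP u w)) :
    ((∀ u v : A, starP (mul u v) = starP u ∘ₗ starP v - starP v ∘ₗ starP u) ∧
     (∀ u v : A, circP (mul u v) = starP u ∘ₗ circP v + circP v ∘ₗ circP u) ∧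
     (∀ u v : A, circP (mul u v) = starP u ∘ₗ circP v - circP v ∘ₗ starP u)) ↔
    ((∀ u v : A, starP (mul u v) = starP u ∘ₗ starP v - starP v ∘ₗ starP u) ∧
     (∀ u v : A,
       starP u ∘ₗ starP v = -(starP u ∘ₗ circP v) ∧
       starP u ∘ₗ starP v = -(circP u ∘ₗ starP v) ∧
       starP u ∘ₗ starP v = circP u ∘ₗ circP v)) := by
  have hadj : ∀ u, IsAdjointPair B B (starP u) (circP u) := hcomp
  have hadj' : ∀ u, IsAdjointPair B B (circP u) (starP u) := fun u => (hadj u).symm ⟨hsymm⟩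
  constructor
  · rintro ⟨h₁, h₂, h₃⟩
    exact ⟨h₁, comp_identities_of_flat hnd hadj hadj' h₁ h₂ h₃⟩
  · rintro ⟨h₁, h₄⟩
    exact ⟨h₁, flat_of_comp_identities hnd hadj h₁ h₄⟩

/-- Flatness (vanishing of the three curvature tensors) of a pseudo-Euclidean left
Leibniz algebra is equivalent to the stated operator identities. -/
theorem flat_iff_operator_identities
    {K A : Type*} [Field K] [AddCommGroup A] [Module K A]
    (htwo : (2 : K) ≠ 0)
    (mul starP circP : A →ₗ[K] A →ₗ[K] A)
    (B : A →ₗ[K] A →ₗ[K] K)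
    (hLL : ∀ u v w : A, mul u (mul v w) = mul (mul u v) w + mul v (mul u w))
    (hsymm : ∀ u v : A, B u v = B v u)
    (hnd : ∀ v : A, (∀ u : A, B u v = 0) → v = 0)
    (htor : ∀ u v : A, mul u v = starP u v + circP v u)
    (hcomp : ∀ u v w : A, B (starP u v) w = B v (circP u w)) :
    ((∀ u v : A, starP (mul u v) = starP u ∘ₗ starP v - starP v ∘ₗ starP u) ∧
     (∀ u v : A, circP (mul u v) = starP u ∘ₗ circP v + circP v ∘ₗ circP u) ∧
     (∀ u v : A, circP (mul u v) = starP u ∘ₗ circP v - circP v ∘ₗ starP u)) ↔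
    ((∀ u v : A, starP (mul u v) = starP u ∘ₗ starP v - starP v ∘ₗ starP u) ∧
     (∀ u v : A,
       starP u ∘ₗ starP v = -(starP u ∘ₗ circP v) ∧
       starP u ∘ₗ starP v = -(circP u ∘ₗ starP v) ∧
       starP u ∘ₗ starP v = circP u ∘ₗ circP v)) :=
  flat_iff_operator_identities_general mul starP circP B hsymm hnd hcomp
end

section
/- Let (A, •, ⟨ , ⟩) be a flat pseudo-Euclidean left Leibniz algebra, i.e., its Levi-Civita products satisfy L⋆_{u•v} = [L⋆_u, L⋆_v] and L⋆_u∘L⋆_v = −L⋆_u∘L∘_v = −L∘_u∘L⋆_v = L∘_u∘L∘_v for all u,v. Then (A, •) is also a right Leibniz algebra (hence a symmetric Leibniz algebra): u•(v•w) = (u•v)•w − (u•w)•v for all u,v,w. -/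
/-!
Write `Lᵤ = starP u`, `Cᵤ = circP u` and `Sᵤ = Lᵤ + Cᵤ`, so that `u • v = Lᵤ v + Cᵥ u` and `Cᵤ` is
the `B`-adjoint of `Lᵤ`. The second flatness condition says exactly that `Lᵤ Sᵥ = 0` and
`Cᵤ Sᵥ = 0`. Passing to adjoints in the first one, `C_{u•w} = [C_w, Cᵤ]`, so
`S_{u•w} = [Lᵤ, L_w] + [C_w, Cᵤ] = 0` because `Lᵤ L_w = Cᵤ C_w`. Since `Sᵥ` is self-adjoint, also
`Sᵥ Cᵤ = 0 = Sᵥ Lᵤ`, so `Sᵥ (u • w) = 0`. Together,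
`v • (u • w) + (u • w) • v = Sᵥ (u • w) + S_{u•w} v = 0`, which turns the left Leibniz identity
into the right one.
-/

open LinearMap

namespace LinearMap.IsAdjointPair

variable {R M M₁ N : Type*} [CommRing R] [AddCommGroup M] [Module R M] [AddCommGroup M₁]
  [Module R M₁] [AddCommGroup N] [Module R N] {B : M →ₗ[R] M →ₗ[R] N} {B' : M₁ →ₗ[R] M₁ →ₗ[R] N}

theorem right_unique (hB : B.SeparatingRight) {f : M → M₁} {g g' : M₁ → M}
    (h : IsAdjointPair B B' f g) (h' : IsAdjointPair B B' f g') : g = g' :=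
  funext fun y ↦ sub_eq_zero.mp <| hB _ fun x ↦ by rw [map_sub, ← h, ← h', sub_self]

theorem comp_eq_zero (hB : B.SeparatingRight) {f f' g g' : M →ₗ[R] M}
    (h : IsAdjointPair B B f g) (h' : IsAdjointPair B B f' g') (hf : f' ∘ₗ f = 0) :
    g ∘ₗ g' = 0 :=
  DFunLike.coe_injective <| right_unique hB (h.comp h') <| by
    rw [← coe_comp, hf]
    exact isAdjointPair_zero

theorem swap (hB : ∀ x y, B x y = B y x) {f g : M → M} (h : IsAdjointPair B B f g) :
    IsAdjointPair B B g f :=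
  fun x y ↦ by rw [hB, ← h, hB]

end LinearMap.IsAdjointPair

section FlatLeibniz

variable {K A : Type*} [CommRing K] [AddCommGroup A] [Module K A] {B : A →ₗ[K] A →ₗ[K] K}
  {mul starP circP : A →ₗ[K] A →ₗ[K] A}

theorem circP_mul (hnd : B.SeparatingRight)
    (hadj : ∀ u, IsAdjointPair B B (starP u) (circP u))
    (hflat1 : ∀ u v, starP (mul u v) = starP u ∘ₗ starP v - starP v ∘ₗ starP u) (u v : A) :
    circP (mul u v) = circP v ∘ₗ circP u - circP u ∘ₗ circP v := by
  have h : IsAdjointPair B B (starP (mul u v)) (circP v ∘ₗ circP u - circP u ∘ₗ circP v) := by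
    rw [hflat1]
    exact ((hadj v).comp (hadj u)).sub ((hadj u).comp (hadj v))
  exact DFunLike.coe_injective ((hadj (mul u v)).right_unique hnd h)

theorem starP_add_circP_mul_eq_zero (hnd : B.SeparatingRight)
    (hadj : ∀ u, IsAdjointPair B B (starP u) (circP u))
    (hflat1 : ∀ u v, starP (mul u v) = starP u ∘ₗ starP v - starP v ∘ₗ starP u)
    (hflat3 : ∀ u v, starP u ∘ₗ starP v = circP u ∘ₗ circP v) (u v : A) :
    starP (mul u v) + circP (mul u v) = 0 := by
  rw [hflat1, circP_mul hnd hadj hflat1, hflat3, hflat3]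
  abel

theorem starP_add_circP_apply_mul_eq_zero (hsymm : ∀ u v, B u v = B v u) (hnd : B.SeparatingRight)
    (htor : ∀ u v, mul u v = starP u v + circP v u)
    (hadj : ∀ u, IsAdjointPair B B (starP u) (circP u))
    (hstar : ∀ u v, starP u ∘ₗ (starP v + circP v) = 0)
    (hcirc : ∀ u v, circP u ∘ₗ (starP v + circP v) = 0) (u v w : A) :
    (starP v + circP v) (mul u w) = 0 := by
  have hS : IsAdjointPair B B (starP v + circP v) (starP v + circP v) := by
    have h := (hadj v).add ((hadj v).swap hsymm)
    rwa [add_comm (⇑(circP v))] at h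
  have hSC : (starP v + circP v) ∘ₗ circP w = 0 :=
    IsAdjointPair.comp_eq_zero hnd hS (hadj w) (hstar w v)
  have hSL : (starP v + circP v) ∘ₗ starP u = 0 :=
    IsAdjointPair.comp_eq_zero hnd hS ((hadj u).swap hsymm) (hcirc u v)
  rw [htor, map_add, ← comp_apply, ← comp_apply, hSL, hSC, LinearMap.zero_apply,
    LinearMap.zero_apply, add_zero]

theorem mul_add_mul_swap (htor : ∀ u v, mul u v = starP u v + circP v u) (a b : A) :
    mul a b + mul b a = (starP a + circP a) b + (starP b + circP b) a := by
  rw [htor, htor, LinearMap.add_apply, LinearMap.add_apply]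
  abel

end FlatLeibniz

theorem flat_implies_rightLeibniz_general
    {K A : Type*} [Field K] [AddCommGroup A] [Module K A]
    (mul starP circP : A →ₗ[K] A →ₗ[K] A)
    (B : A →ₗ[K] A →ₗ[K] K)
    (hLL : ∀ u v w : A, mul u (mul v w) = mul (mul u v) w + mul v (mul u w))
    (hsymm : ∀ u v : A, B u v = B v u)
    (hnd : ∀ v : A, (∀ u : A, B u v = 0) → v = 0)
    (htor : ∀ u v : A, mul u v = starP u v + circP v u)
    (hcomp : ∀ u v w : A, B (starP u v) w = B v (circP u w))
    (hflat1 : ∀ u v : A, starP (mul u v) = starP u ∘ₗ starP v - starP v ∘ₗ starP u)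
    (hflat2 : ∀ u v : A,
      starP u ∘ₗ starP v = -(starP u ∘ₗ circP v) ∧
      starP u ∘ₗ starP v = -(circP u ∘ₗ starP v) ∧
      starP u ∘ₗ starP v = circP u ∘ₗ circP v) :
    ∀ u v w : A, mul u (mul v w) = mul (mul u v) w - mul (mul u w) v := by
  have hstar : ∀ u v, starP u ∘ₗ (starP v + circP v) = 0 := fun u v ↦ by
    rw [comp_add, (hflat2 u v).1, neg_add_cancel]
  have hcirc : ∀ u v, circP u ∘ₗ (starP v + circP v) = 0 := fun u v ↦ by
    rw [comp_add, ← (hflat2 u v).2.2, add_comm]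
    exact eq_neg_iff_add_eq_zero.mp (hflat2 u v).2.1
  intro u v w
  have hskew : mul (mul u w) v + mul v (mul u w) = 0 := by
    rw [mul_add_mul_swap htor, starP_add_circP_mul_eq_zero hnd hcomp hflat1
      (fun u v ↦ (hflat2 u v).2.2), starP_add_circP_apply_mul_eq_zero hsymm hnd htor hcomp hstar
      hcirc, LinearMap.zero_apply, add_zero]
  rw [hLL, eq_neg_of_add_eq_zero_right hskew]
  abel

/-- Every flat pseudo-Euclidean left Leibniz algebra is a right Leibniz algebra
(hence a symmetric Leibniz algebra). -/
theorem flat_implies_rightLeibniz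
    {K A : Type*} [Field K] [AddCommGroup A] [Module K A]
    (htwo : (2 : K) ≠ 0)
    (mul starP circP : A →ₗ[K] A →ₗ[K] A)
    (B : A →ₗ[K] A →ₗ[K] K)
    (hLL : ∀ u v w : A, mul u (mul v w) = mul (mul u v) w + mul v (mul u w))
    (hsymm : ∀ u v : A, B u v = B v u)
    (hnd : ∀ v : A, (∀ u : A, B u v = 0) → v = 0)
    (htor : ∀ u v : A, mul u v = starP u v + circP v u)
    (hcomp : ∀ u v w : A, B (starP u v) w = B v (circP u w))
    (hflat1 : ∀ u v : A, starP (mul u v) = starP u ∘ₗ starP v - starP v ∘ₗ starP u)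
    (hflat2 : ∀ u v : A,
      starP u ∘ₗ starP v = -(starP u ∘ₗ circP v) ∧
      starP u ∘ₗ starP v = -(circP u ∘ₗ starP v) ∧
      starP u ∘ₗ starP v = circP u ∘ₗ circP v) :
    ∀ u v w : A, mul u (mul v w) = mul (mul u v) w - mul (mul u w) v :=
  flat_implies_rightLeibniz_general mul starP circP B hLL hsymm hnd htor hcomp hflat1 hflat2
end

section
/- Let (A, •, ⟨ , ⟩) be a flat pseudo-Euclidean left Leibniz algebra with Levi-Civita products (⋆, ∘), and let Leib(A) = span{u•v + v•u}. Then for every u ∈ Leib(A) all multiplication operators vanish: L⋆_u = L∘_u = R⋆_u = R∘_u = 0; consequently both Leib(A) and its orthogonal complement Leib(A)^⊥ are two-sided ideals for both products ⋆ and ∘. -/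
/-!
For a left Leibniz product the left multiplication is a representation, `L_{u•v} = [L_u, L_v]`,
and by flatness so is `u ↦ L⋆_u`; both therefore vanish on the symmetric products `u•v + v•u`.
Flatness also turns `⟨u•v, c∘d⟩` into the expression `⟨v, u⋆(c⋆d)⟩ - ⟨u, v⋆(c⋆d)⟩`, which is
antisymmetric in `u, v`, so `⟨u•v + v•u, c∘d⟩ = 0`; by nondegeneracy this is `R⋆_{u•v+v•u} = 0`.
The remaining operators follow from adjointness and `u•v = u⋆v + v∘u`, and once all
multiplications by `Leib(A)` vanish, every product is orthogonal to `Leib(A)`.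
-/

open Submodule

section Representation

variable {R M N : Type*} [CommRing R] [AddCommGroup M] [Module R M] [AddCommGroup N] [Module R N]

theorem map_mul_add_mul_swap_eq_zero {mul : M →ₗ[R] M →ₗ[R] M} {φ : M →ₗ[R] N →ₗ[R] N}
    (hφ : ∀ u v, φ (mul u v) = φ u ∘ₗ φ v - φ v ∘ₗ φ u) (u v : M) :
    φ (mul u v + mul v u) = 0 := by
  rw [map_add, hφ, hφ]
  abel

theorem mul_mul_eq_commutator_of_leibniz {mul : M →ₗ[R] M →ₗ[R] M}
    (hLL : ∀ u v w, mul u (mul v w) = mul (mul u v) w + mul v (mul u w)) (u v : M) :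
    mul (mul u v) = mul u ∘ₗ mul v - mul v ∘ₗ mul u := by
  ext w
  simp only [LinearMap.comp_apply, LinearMap.sub_apply, hLL u v w, add_sub_cancel_right]

theorem span_mul_add_mul_swap_le_ker {P : Type*} [AddCommGroup P] [Module R P]
    {mul : M →ₗ[R] M →ₗ[R] M} {φ : M →ₗ[R] P} (hφ : ∀ u v, φ (mul u v + mul v u) = 0) :
    span R {x | ∃ u v, x = mul u v + mul v u} ≤ LinearMap.ker φ :=
  span_le.mpr <| by
    rintro _ ⟨u, v, rfl⟩
    exact hφ u v

end Representation

section LeviCivita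

variable {R A : Type*} [CommRing R] [AddCommGroup A] [Module R A]
  {mul starP circP : A →ₗ[R] A →ₗ[R] A} {B : LinearMap.BilinForm R A}

theorem bilin_circP_apply (hsymm : ∀ u v, B u v = B v u)
    (hcomp : ∀ u v w, B (starP u v) w = B v (circP u w)) (u v w : A) :
    B (circP v u) w = B u (starP v w) := by
  rw [hsymm, ← hcomp, hsymm]

theorem bilin_mul_circP (hsymm : ∀ u v, B u v = B v u)
    (htor : ∀ u v, mul u v = starP u v + circP v u)
    (hcomp : ∀ u v w, B (starP u v) w = B v (circP u w))
    (hsc : ∀ u v, starP u ∘ₗ starP v = -(starP u ∘ₗ circP v))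
    (hcc : ∀ u v, starP u ∘ₗ starP v = circP u ∘ₗ circP v) (u v c d : A) :
    B (mul u v) (circP c d) = B v (starP u (starP c d)) - B u (starP v (starP c d)) := by
  have hcc' : circP u (circP c d) = starP u (starP c d) := (LinearMap.congr_fun (hcc u c) d).symm
  have hsc' : starP v (circP c d) = -starP v (starP c d) :=
    neg_eq_iff_eq_neg.mp (LinearMap.congr_fun (hsc v c) d).symm
  rw [htor, map_add, LinearMap.add_apply, hcomp, bilin_circP_apply hsymm hcomp, hcc', hsc',
    map_neg]
  ring

theorem starP_apply_mul_add_mul_swap_eq_zero (hsymm : ∀ u v, B u v = B v u)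
    (hnd : B.SeparatingRight)
    (htor : ∀ u v, mul u v = starP u v + circP v u)
    (hcomp : ∀ u v w, B (starP u v) w = B v (circP u w))
    (hsc : ∀ u v, starP u ∘ₗ starP v = -(starP u ∘ₗ circP v))
    (hcc : ∀ u v, starP u ∘ₗ starP v = circP u ∘ₗ circP v) (w u v : A) :
    starP w (mul u v + mul v u) = 0 := by
  refine hnd _ fun t => ?_
  rw [hsymm, hcomp, map_add, LinearMap.add_apply, bilin_mul_circP hsymm htor hcomp hsc hcc,
    bilin_mul_circP hsymm htor hcomp hsc hcc]
  ring

theorem circP_eq_zero_of_starP_eq_zero (hnd : B.SeparatingRight)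
    (hcomp : ∀ u v w, B (starP u v) w = B v (circP u w)) {u : A} (hu : starP u = 0) :
    circP u = 0 := by
  ext w
  refine hnd _ fun t => ?_
  rw [← hcomp, hu, LinearMap.zero_apply, map_zero, LinearMap.zero_apply]

theorem circP_apply_eq_zero (htor : ∀ u v, mul u v = starP u v + circP v u) {u : A}
    (hstar : starP u = 0) (hmul : mul u = 0) (v : A) : circP v u = 0 := by
  simpa [hstar, hmul] using (htor u v).symm

theorem starP_apply_mem_orthogonal (hsymm : ∀ u v, B u v = B v u)
    (hcomp : ∀ u v w, B (starP u v) w = B v (circP u w)) {S : Submodule R A}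
    (hS : ∀ n ∈ S, ∀ v, circP v n = 0) (x a : A) : starP x a ∈ B.orthogonal S := fun n hn => by
  change B n (starP x a) = 0
  rw [hsymm, hcomp, hS n hn, map_zero]

theorem circP_apply_mem_orthogonal (hcomp : ∀ u v w, B (starP u v) w = B v (circP u w))
    {S : Submodule R A} (hS : ∀ n ∈ S, ∀ v, starP v n = 0) (x a : A) :
    circP x a ∈ B.orthogonal S := fun n hn => by
  change B n (circP x a) = 0
  rw [← hcomp, hS n hn, map_zero, LinearMap.zero_apply]

end LeviCivita

theorem flat_leibnizIdeal_LeviCivita_general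
    {K A : Type*} [Field K] [AddCommGroup A] [Module K A]
    (mul starP circP : A →ₗ[K] A →ₗ[K] A)
    (B : LinearMap.BilinForm K A)
    (hLL : ∀ u v w : A, mul u (mul v w) = mul (mul u v) w + mul v (mul u w))
    (hsymm : ∀ u v : A, B u v = B v u)
    (hnd : ∀ v : A, (∀ u : A, B u v = 0) → v = 0)
    (htor : ∀ u v : A, mul u v = starP u v + circP v u)
    (hcomp : ∀ u v w : A, B (starP u v) w = B v (circP u w))
    (hflat1 : ∀ u v : A, starP (mul u v) = starP u ∘ₗ starP v - starP v ∘ₗ starP u)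
    (hflat2 : ∀ u v : A,
      starP u ∘ₗ starP v = -(starP u ∘ₗ circP v) ∧
      starP u ∘ₗ starP v = -(circP u ∘ₗ starP v) ∧
      starP u ∘ₗ starP v = circP u ∘ₗ circP v)
    (Leib : Submodule K A)
    (hLeib : Leib = Submodule.span K {x : A | ∃ u v : A, x = mul u v + mul v u}) :
    (∀ u ∈ Leib, starP u = 0 ∧ circP u = 0 ∧ ∀ v : A, starP v u = 0 ∧ circP v u = 0) ∧
    (∀ x ∈ Leib, ∀ a : A,
      starP x a ∈ Leib ∧ starP a x ∈ Leib ∧ circP x a ∈ Leib ∧ circP a x ∈ Leib) ∧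
    (∀ x ∈ B.orthogonal Leib, ∀ a : A,
      starP x a ∈ B.orthogonal Leib ∧ starP a x ∈ B.orthogonal Leib ∧
      circP x a ∈ B.orthogonal Leib ∧ circP a x ∈ B.orthogonal Leib) := by
  have hstar : Leib ≤ LinearMap.ker starP :=
    hLeib ▸ span_mul_add_mul_swap_le_ker (map_mul_add_mul_swap_eq_zero hflat1)
  have hmul : Leib ≤ LinearMap.ker mul := hLeib ▸ span_mul_add_mul_swap_le_ker
    (map_mul_add_mul_swap_eq_zero (mul_mul_eq_commutator_of_leibniz hLL))
  have hright (v : A) : Leib ≤ LinearMap.ker (starP v) := hLeib ▸ span_mul_add_mul_swap_le_ker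
    (starP_apply_mul_add_mul_swap_eq_zero hsymm hnd htor hcomp (fun u v => (hflat2 u v).1)
      (fun u v => (hflat2 u v).2.2) v)
  have vanish : ∀ u ∈ Leib, starP u = 0 ∧ circP u = 0 ∧ ∀ v, starP v u = 0 ∧ circP v u = 0 :=
    fun u hu => ⟨hstar hu, circP_eq_zero_of_starP_eq_zero hnd hcomp (hstar hu),
      fun v => ⟨hright v hu, circP_apply_eq_zero htor (hstar hu) (hmul hu) v⟩⟩
  refine ⟨vanish, fun x hx a => ?_, fun x _ a => ?_⟩
  · obtain ⟨hs, hc, hr⟩ := vanish x hx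
    simp [hs, hc, hr a]
  · have hRstar : ∀ n ∈ Leib, ∀ v, starP v n = 0 := fun n hn v => ((vanish n hn).2.2 v).1
    have hRcirc : ∀ n ∈ Leib, ∀ v, circP v n = 0 := fun n hn v => ((vanish n hn).2.2 v).2
    exact ⟨starP_apply_mem_orthogonal hsymm hcomp hRcirc x a,
      starP_apply_mem_orthogonal hsymm hcomp hRcirc a x,
      circP_apply_mem_orthogonal hcomp hRstar x a, circP_apply_mem_orthogonal hcomp hRstar a x⟩

/-- In a flat pseudo-Euclidean left Leibniz algebra, all multiplication operators
of the Levi-Civita products vanish on Leib(A), and Leib(A) and Leib(A)^⊥ are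
two-sided ideals for both Levi-Civita products. -/
theorem flat_leibnizIdeal_LeviCivita
    {K A : Type*} [Field K] [AddCommGroup A] [Module K A]
    (htwo : (2 : K) ≠ 0)
    (mul starP circP : A →ₗ[K] A →ₗ[K] A)
    (B : LinearMap.BilinForm K A)
    (hLL : ∀ u v w : A, mul u (mul v w) = mul (mul u v) w + mul v (mul u w))
    (hsymm : ∀ u v : A, B u v = B v u)
    (hnd : ∀ v : A, (∀ u : A, B u v = 0) → v = 0)
    (htor : ∀ u v : A, mul u v = starP u v + circP v u)
    (hcomp : ∀ u v w : A, B (starP u v) w = B v (circP u w))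
    (hflat1 : ∀ u v : A, starP (mul u v) = starP u ∘ₗ starP v - starP v ∘ₗ starP u)
    (hflat2 : ∀ u v : A,
      starP u ∘ₗ starP v = -(starP u ∘ₗ circP v) ∧
      starP u ∘ₗ starP v = -(circP u ∘ₗ starP v) ∧
      starP u ∘ₗ starP v = circP u ∘ₗ circP v)
    (Leib : Submodule K A)
    (hLeib : Leib = Submodule.span K {x : A | ∃ u v : A, x = mul u v + mul v u}) :
    (∀ u ∈ Leib, starP u = 0 ∧ circP u = 0 ∧ ∀ v : A, starP v u = 0 ∧ circP v u = 0) ∧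
    (∀ x ∈ Leib, ∀ a : A,
      starP x a ∈ Leib ∧ starP a x ∈ Leib ∧ circP x a ∈ Leib ∧ circP a x ∈ Leib) ∧
    (∀ x ∈ B.orthogonal Leib, ∀ a : A,
      starP x a ∈ B.orthogonal Leib ∧ starP a x ∈ B.orthogonal Leib ∧
      circP x a ∈ B.orthogonal Leib ∧ circP a x ∈ B.orthogonal Leib) :=
  flat_leibnizIdeal_LeviCivita_general mul starP circP B hLL hsymm hnd htor hcomp hflat1 hflat2 Leib
    hLeib
end

section
/- Let (A, •, ⟨ , ⟩) be a flat pseudo-Euclidean left Leibniz algebra. If the restriction of ⟨ , ⟩ to Leib(A) = span{u•v + v•u} is nondegenerate, then Leib(A) = {0}, i.e., (A, •) is a Lie algebra. In particular, if (A, •) is not a Lie algebra, then Leib(A) ∩ Leib(A)^⊥ ≠ {0}. -/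
/-!
Writing `T v = L⋆_v + L∘_v`, the torsion-free condition gives `u•v + v•u = T u v + T v u`, and
the flatness identities say exactly that `L⋆_u ∘ T v = 0` and `L∘_u ∘ T v = 0`. Hence every `L⋆_u`
and `L∘_u` vanishes on `Leib(A)`. Since `⟨z, a•b⟩ = ⟨b, a∘z⟩ + ⟨b⋆z, a⟩`, this makes `Leib(A)`
orthogonal to all products, so `Leib(A)` is totally isotropic, i.e. `Leib(A) ⊆ Leib(A)^⊥`.
-/

namespace LeibnizAlgebra

variable {K A : Type*} [CommRing K] [AddCommGroup A] [Module K A]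

def leibSubmodule (mul : A →ₗ[K] A →ₗ[K] A) : Submodule K A :=
  Submodule.span K {x : A | ∃ u v : A, x = mul u v + mul v u}

section Torsion

variable {mul starP circP : A →ₗ[K] A →ₗ[K] A}
  (htor : ∀ u v : A, mul u v = starP u v + circP v u)
include htor

theorem mul_add_mul_swap_eq (p q : A) :
    mul p q + mul q p = (starP p + circP p) q + (starP q + circP q) p := by
  simp only [htor, LinearMap.add_apply]
  abel

theorem leibSubmodule_le_ker {f : A →ₗ[K] A} (hf : ∀ v : A, f ∘ₗ (starP v + circP v) = 0) :
    leibSubmodule mul ≤ LinearMap.ker f := by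
  refine Submodule.span_le.mpr ?_
  rintro _ ⟨p, q, rfl⟩
  rw [SetLike.mem_coe, LinearMap.mem_ker, mul_add_mul_swap_eq htor, map_add,
    ← LinearMap.comp_apply, ← LinearMap.comp_apply f, hf, hf, LinearMap.zero_apply,
    LinearMap.zero_apply, add_zero]

theorem bilin_apply_mul_eq {B : LinearMap.BilinForm K A} (hsymm : ∀ u v : A, B u v = B v u)
    (hcomp : ∀ u v w : A, B (starP u v) w = B v (circP u w)) (z a b : A) :
    B z (mul a b) = B b (circP a z) + B (starP b z) a := by
  rw [htor, map_add, hsymm z, hcomp, hcomp]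

end Torsion

theorem comp_add_eq_zero_of_eq_neg {f g h : A →ₗ[K] A} (hfg : f ∘ₗ g = -(f ∘ₗ h)) :
    f ∘ₗ (g + h) = 0 := by
  rw [LinearMap.comp_add, hfg, neg_add_cancel]

variable {mul starP circP : A →ₗ[K] A →ₗ[K] A} {B : LinearMap.BilinForm K A}
  (htor : ∀ u v : A, mul u v = starP u v + circP v u)
  (hsymm : ∀ u v : A, B u v = B v u)
  (hcomp : ∀ u v w : A, B (starP u v) w = B v (circP u w))
  (hflat2 : ∀ u v : A,
      starP u ∘ₗ starP v = -(starP u ∘ₗ circP v) ∧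
      starP u ∘ₗ starP v = -(circP u ∘ₗ starP v) ∧
      starP u ∘ₗ starP v = circP u ∘ₗ circP v)
include htor hflat2

theorem starP_apply_eq_zero_of_mem_leibSubmodule (u : A) {z : A} (hz : z ∈ leibSubmodule mul) :
    starP u z = 0 :=
  leibSubmodule_le_ker htor (fun v => comp_add_eq_zero_of_eq_neg (hflat2 u v).1) hz

theorem circP_apply_eq_zero_of_mem_leibSubmodule (u : A) {z : A} (hz : z ∈ leibSubmodule mul) :
    circP u z = 0 := by
  refine leibSubmodule_le_ker htor (fun v => comp_add_eq_zero_of_eq_neg ?_) hz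
  rw [← (hflat2 u v).2.2, (hflat2 u v).2.1, neg_neg]

include hsymm hcomp

theorem leibSubmodule_le_orthogonal : leibSubmodule mul ≤ B.orthogonal (leibSubmodule mul) := by
  intro x hx
  refine (LinearMap.BilinForm.mem_orthogonal_iff).mpr fun z hz => ?_
  suffices leibSubmodule mul ≤ LinearMap.ker (B z) from this hx
  refine Submodule.span_le.mpr ?_
  rintro _ ⟨p, q, rfl⟩
  simp only [SetLike.mem_coe, LinearMap.mem_ker, map_add, bilin_apply_mul_eq htor hsymm hcomp,
    circP_apply_eq_zero_of_mem_leibSubmodule htor hflat2 _ hz,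
    starP_apply_eq_zero_of_mem_leibSubmodule htor hflat2 _ hz, map_zero, LinearMap.zero_apply,
    add_zero]

end LeibnizAlgebra

open LeibnizAlgebra in
theorem flat_nondegenerate_Leib_is_Lie_general
    {K A : Type*} [Field K] [AddCommGroup A] [Module K A]
    (mul starP circP : A →ₗ[K] A →ₗ[K] A)
    (B : LinearMap.BilinForm K A)
    (hsymm : ∀ u v : A, B u v = B v u)
    (htor : ∀ u v : A, mul u v = starP u v + circP v u)
    (hcomp : ∀ u v w : A, B (starP u v) w = B v (circP u w))
    (hflat2 : ∀ u v : A,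
      starP u ∘ₗ starP v = -(starP u ∘ₗ circP v) ∧
      starP u ∘ₗ starP v = -(circP u ∘ₗ starP v) ∧
      starP u ∘ₗ starP v = circP u ∘ₗ circP v)
    (Leib : Submodule K A)
    (hLeib : Leib = Submodule.span K {x : A | ∃ u v : A, x = mul u v + mul v u}) :
    ((∀ x ∈ Leib, (∀ y ∈ Leib, B x y = 0) → x = 0) → Leib = ⊥) ∧
    (Leib ≠ ⊥ → Leib ⊓ B.orthogonal Leib ≠ ⊥) := by
  have hiso : Leib ≤ B.orthogonal Leib :=
    hLeib ▸ leibSubmodule_le_orthogonal htor hsymm hcomp hflat2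
  refine ⟨fun hnd => ?_, fun hne => by rwa [inf_of_le_left hiso]⟩
  exact (Submodule.eq_bot_iff Leib).mpr fun x hx => hnd x hx fun y hy => hiso hy x hx

/-- In a flat pseudo-Euclidean left Leibniz algebra: if ⟨,⟩ restricted to Leib(A) is
nondegenerate then Leib(A) = 0 (so A is a Lie algebra); in particular if A is not a
Lie algebra then Leib(A) ∩ Leib(A)^⊥ ≠ 0. -/
theorem flat_nondegenerate_Leib_is_Lie
    {K A : Type*} [Field K] [AddCommGroup A] [Module K A]
    (htwo : (2 : K) ≠ 0)
    (mul starP circP : A →ₗ[K] A →ₗ[K] A)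
    (B : LinearMap.BilinForm K A)
    (hLL : ∀ u v w : A, mul u (mul v w) = mul (mul u v) w + mul v (mul u w))
    (hsymm : ∀ u v : A, B u v = B v u)
    (hnd : ∀ v : A, (∀ u : A, B u v = 0) → v = 0)
    (htor : ∀ u v : A, mul u v = starP u v + circP v u)
    (hcomp : ∀ u v w : A, B (starP u v) w = B v (circP u w))
    (hflat1 : ∀ u v : A, starP (mul u v) = starP u ∘ₗ starP v - starP v ∘ₗ starP u)
    (hflat2 : ∀ u v : A,
      starP u ∘ₗ starP v = -(starP u ∘ₗ circP v) ∧
      starP u ∘ₗ starP v = -(circP u ∘ₗ starP v) ∧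
      starP u ∘ₗ starP v = circP u ∘ₗ circP v)
    (Leib : Submodule K A)
    (hLeib : Leib = Submodule.span K {x : A | ∃ u v : A, x = mul u v + mul v u}) :
    ((∀ x ∈ Leib, (∀ y ∈ Leib, B x y = 0) → x = 0) → Leib = ⊥) ∧
    (Leib ≠ ⊥ → Leib ⊓ B.orthogonal Leib ≠ ⊥) :=
  flat_nondegenerate_Leib_is_Lie_general mul starP circP B hsymm htor hcomp hflat2 Leib hLeib
end

section
/- Let (A, •, ⟨ , ⟩) be a quadratic left Leibniz algebra (⟨ , ⟩ nondegenerate symmetric and invariant: ⟨u•v, w⟩ = ⟨u, v•w⟩). Then the Levi-Civita products are given by u⋆v = v∘u = (1/2) u•v for all u,v ∈ A. -/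
/-!
Torsion and compatibility give `⟨u⋆v, w⟩ = ⟨v, w•u⟩ - ⟨v, w⋆u⟩`. By invariance and symmetry of the
form, the three cyclic instances of this identity (in `u, v, w`) combine, as in the Koszul formula,
to `2⟨u⋆v, w⟩ = ⟨u•v, w⟩`; nondegeneracy turns this into `2 (u⋆v) = u•v`, and then torsion gives
`v∘u = u•v - u⋆v = u⋆v`.
-/

section LeviCivita

variable {K A : Type*} [CommRing K] [AddCommGroup A] [Module K A]
  {mul starP circP : A →ₗ[K] A →ₗ[K] A} {B : A →ₗ[K] A →ₗ[K] K}

theorem form_starP_eq_sub (htor : ∀ u v : A, mul u v = starP u v + circP v u)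
    (hcomp : ∀ u v w : A, B (starP u v) w = B v (circP u w)) (u v w : A) :
    B (starP u v) w = B v (mul w u) - B v (starP w u) := by
  rw [hcomp, htor w u, map_add, add_sub_cancel_left]

theorem two_mul_form_starP (hsymm : ∀ u v : A, B u v = B v u)
    (hinv : ∀ u v w : A, B (mul u v) w = B u (mul v w))
    (htor : ∀ u v : A, mul u v = starP u v + circP v u)
    (hcomp : ∀ u v w : A, B (starP u v) w = B v (circP u w)) (u v w : A) :
    2 * B (starP u v) w = B (mul u v) w := by
  have huvw : B (starP u v) w = B (mul u v) w - B (starP w u) v := by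
    rw [form_starP_eq_sub htor hcomp, hsymm v (mul w u), hinv, hsymm w, hsymm v]
  have hwuv : B (starP w u) v = B (mul u v) w - B (starP v w) u := by
    rw [form_starP_eq_sub htor hcomp, ← hinv, hsymm u]
  have hvwu : B (starP v w) u = B (mul u v) w - B (starP u v) w := by
    rw [form_starP_eq_sub htor hcomp, hsymm w (mul u v), hsymm w]
  linear_combination huvw + hvwu - hwuv

theorem two_smul_starP (hsymm : ∀ u v : A, B u v = B v u)
    (hnd : ∀ v : A, (∀ u : A, B u v = 0) → v = 0)
    (hinv : ∀ u v w : A, B (mul u v) w = B u (mul v w))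
    (htor : ∀ u v : A, mul u v = starP u v + circP v u)
    (hcomp : ∀ u v w : A, B (starP u v) w = B v (circP u w)) (u v : A) :
    (2 : K) • starP u v = mul u v := by
  refine sub_eq_zero.mp (hnd _ fun w => ?_)
  rw [map_sub, map_smul, smul_eq_mul, hsymm w, hsymm w (mul u v),
    two_mul_form_starP hsymm hinv htor hcomp, sub_self]

end LeviCivita

theorem quadratic_leviCivita_half_general
    {K A : Type*} [Field K] [AddCommGroup A] [Module K A]
    (htwo : (2 : K) ≠ 0)
    (mul starP circP : A →ₗ[K] A →ₗ[K] A)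
    (B : A →ₗ[K] A →ₗ[K] K)
    (hsymm : ∀ u v : A, B u v = B v u)
    (hnd : ∀ v : A, (∀ u : A, B u v = 0) → v = 0)
    (hinv : ∀ u v w : A, B (mul u v) w = B u (mul v w))
    (htor : ∀ u v : A, mul u v = starP u v + circP v u)
    (hcomp : ∀ u v w : A, B (starP u v) w = B v (circP u w)) :
    ∀ u v : A,
      starP u v = (2 : K)⁻¹ • mul u v ∧ circP v u = (2 : K)⁻¹ • mul u v := by
  intro u v
  have htwice := two_smul_starP hsymm hnd hinv htor hcomp u v
  have hstar : starP u v = (2 : K)⁻¹ • mul u v := (eq_inv_smul_iff₀ htwo).mpr htwice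
  refine ⟨hstar, ?_⟩
  have hcirc : circP v u = starP u v := by
    rw [← add_right_inj (starP u v), ← htor, ← htwice, two_smul]
  rw [hcirc, hstar]

/-- For a quadratic left Leibniz algebra the Levi-Civita products are given by
u⋆v = v∘u = (1/2) u•v. -/
theorem quadratic_leviCivita_half
    {K A : Type*} [Field K] [AddCommGroup A] [Module K A]
    (htwo : (2 : K) ≠ 0)
    (mul starP circP : A →ₗ[K] A →ₗ[K] A)
    (B : A →ₗ[K] A →ₗ[K] K)
    (hLL : ∀ u v w : A, mul u (mul v w) = mul (mul u v) w + mul v (mul u w))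
    (hsymm : ∀ u v : A, B u v = B v u)
    (hnd : ∀ v : A, (∀ u : A, B u v = 0) → v = 0)
    (hinv : ∀ u v w : A, B (mul u v) w = B u (mul v w))
    (htor : ∀ u v : A, mul u v = starP u v + circP v u)
    (hcomp : ∀ u v w : A, B (starP u v) w = B v (circP u w)) :
    ∀ u v : A,
      starP u v = (2 : K)⁻¹ • mul u v ∧ circP v u = (2 : K)⁻¹ • mul u v :=
  quadratic_leviCivita_half_general htwo mul starP circP B hsymm hnd hinv htor hcomp
end

section
/- A quadratic left Leibniz algebra (A, •, ⟨ , ⟩) (with ⟨ , ⟩ nondegenerate, symmetric and invariant) is flat if and only if (A, •) is a 2-step nilpotent symmetric Leibniz algebra, i.e., (u•v)•w = 0 = u•(v•w) for all u,v,w and A is both a left and right Leibniz algebra. -/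
/-!
Invariance and symmetry make `⟨u • v, w⟩` cyclically invariant, and with the Koszul-type identity
`⟨u • v, w⟩ = ⟨u ⋆ v, w⟩ + ⟨v ⋆ w, u⟩` this forces `2 (u ⋆ v) = u • v`, hence `2 (u ∘ v) = v • u`:
the Levi-Civita products are half the left and right multiplications `L` and `R`. In every left
Leibniz algebra `L (u • v) = [L u, L v]` and `R (u • v) = L u R v + R v R u = L u R v - R v L u`, so
each flatness identity for `(½ L, ½ R)` reads `½ X = ¼ X` with `X = L (u • v)` or `X = R (u • v)`.
Flatness thus says exactly that all products `(u • v) • w` and `w • (u • v)` vanish.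
-/

theorem smul_eq_smul_smul_iff {K M : Type*} [Field K] [AddCommGroup M] [Module K M]
    {c : K} (hc₀ : c ≠ 0) (hc₁ : c ≠ 1) {x : M} : c • x = c • c • x ↔ x = 0 := by
  rw [smul_right_inj hc₀]
  refine ⟨fun h => ?_, fun h => by rw [h, smul_zero]⟩
  have : (1 - c) • x = 0 := by rw [sub_smul, one_smul, ← h, sub_self]
  exact (smul_eq_zero.mp this).resolve_left (sub_ne_zero.mpr hc₁.symm)

theorem inv_two_smul_eq_inv_two_smul_inv_two_smul_iff {K M : Type*} [Field K] [AddCommGroup M]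
    [Module K M] (htwo : (2 : K) ≠ 0) {x : M} :
    (2 : K)⁻¹ • x = (2 : K)⁻¹ • (2 : K)⁻¹ • x ↔ x = 0 :=
  smul_eq_smul_smul_iff (inv_ne_zero htwo) <| by
    rw [Ne, inv_eq_one]
    exact fun h => one_ne_zero (by linear_combination h)

section LeftLeibniz

variable {K A : Type*} [CommRing K] [AddCommGroup A] [Module K A] {mul : A →ₗ[K] A →ₗ[K] A}

theorem leibniz_mul_mul_eq_commutator
    (hLL : ∀ u v w : A, mul u (mul v w) = mul (mul u v) w + mul v (mul u w)) (u v : A) :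
    mul (mul u v) = mul u ∘ₗ mul v - mul v ∘ₗ mul u := by
  ext w
  simp only [LinearMap.sub_apply, LinearMap.comp_apply, hLL u v w, add_sub_cancel_right]

theorem leibniz_flip_mul_eq_add
    (hLL : ∀ u v w : A, mul u (mul v w) = mul (mul u v) w + mul v (mul u w)) (u v : A) :
    mul.flip (mul u v) = mul u ∘ₗ mul.flip v + mul.flip v ∘ₗ mul.flip u := by
  ext w
  simp only [LinearMap.add_apply, LinearMap.comp_apply, LinearMap.flip_apply, hLL w u v, add_comm]

theorem leibniz_flip_mul_eq_sub
    (hLL : ∀ u v w : A, mul u (mul v w) = mul (mul u v) w + mul v (mul u w)) (u v : A) :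
    mul.flip (mul u v) = mul u ∘ₗ mul.flip v - mul.flip v ∘ₗ mul u := by
  ext w
  simp only [LinearMap.sub_apply, LinearMap.comp_apply, LinearMap.flip_apply, hLL u w v,
    add_sub_cancel_left]

end LeftLeibniz

section Quadratic

variable {K A : Type*} [CommRing K] [AddCommGroup A] [Module K A]
  {mul starP circP : A →ₗ[K] A →ₗ[K] A} {B : A →ₗ[K] A →ₗ[K] K}

theorem koszul_formula (hsymm : ∀ u v : A, B u v = B v u)
    (htor : ∀ u v : A, mul u v = starP u v + circP v u)
    (hcomp : ∀ u v w : A, B (starP u v) w = B v (circP u w)) (u v w : A) :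
    B (mul u v) w = B (starP u v) w + B (starP v w) u := by
  rw [htor, map_add, LinearMap.add_apply, hcomp v w u, hsymm (circP v u)]

theorem two_smul_starP_eq_mul (hsymm : ∀ u v : A, B u v = B v u)
    (hnd : ∀ v : A, (∀ u : A, B u v = 0) → v = 0)
    (hinv : ∀ u v w : A, B (mul u v) w = B u (mul v w))
    (htor : ∀ u v : A, mul u v = starP u v + circP v u)
    (hcomp : ∀ u v w : A, B (starP u v) w = B v (circP u w)) :
    (2 : K) • starP = mul := by
  have hcyclic : ∀ u v w : A, B (mul u v) w = B (mul v w) u := fun u v w => by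
    rw [hinv, hsymm]
  ext u v
  refine sub_eq_zero.mp (hnd _ fun w => ?_)
  have h₁ := koszul_formula hsymm htor hcomp u v w
  have h₂ := koszul_formula hsymm htor hcomp v w u
  have h₃ := koszul_formula hsymm htor hcomp w u v
  rw [hsymm]
  simp only [LinearMap.smul_apply, map_sub, map_smul, LinearMap.sub_apply, smul_eq_mul]
  linear_combination h₂ - h₁ - h₃ - hcyclic v w u

end Quadratic

section Flat

variable {K A : Type*} [Field K] [AddCommGroup A] [Module K A] {mul : A →ₗ[K] A →ₗ[K] A}

theorem starP_circP_eq_half (htwo : (2 : K) ≠ 0) {starP circP : A →ₗ[K] A →ₗ[K] A}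
    (htor : ∀ u v : A, mul u v = starP u v + circP v u) (hstar : (2 : K) • starP = mul) :
    starP = (2 : K)⁻¹ • mul ∧ circP = (2 : K)⁻¹ • mul.flip := by
  have hstar' : starP = (2 : K)⁻¹ • mul := by rw [← hstar, inv_smul_smul₀ htwo]
  refine ⟨hstar', ?_⟩
  ext v u
  rw [eq_sub_of_add_eq' (htor u v).symm, hstar']
  simp only [LinearMap.smul_apply, LinearMap.flip_apply]
  rw [sub_eq_iff_eq_add, ← two_smul K, smul_inv_smul₀ htwo]

def IsFlat (mul starP circP : A →ₗ[K] A →ₗ[K] A) : Prop :=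
  (∀ u v : A, starP (mul u v) = starP u ∘ₗ starP v - starP v ∘ₗ starP u) ∧
  (∀ u v : A, circP (mul u v) = starP u ∘ₗ circP v + circP v ∘ₗ circP u) ∧
  (∀ u v : A, circP (mul u v) = starP u ∘ₗ circP v - circP v ∘ₗ starP u)

theorem isFlat_half_iff (htwo : (2 : K) ≠ 0)
    (hLL : ∀ u v w : A, mul u (mul v w) = mul (mul u v) w + mul v (mul u w)) :
    IsFlat mul ((2 : K)⁻¹ • mul) ((2 : K)⁻¹ • mul.flip) ↔
      (∀ u v : A, mul (mul u v) = 0) ∧ ∀ u v : A, mul.flip (mul u v) = 0 := by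
  simp only [IsFlat, LinearMap.smul_apply, LinearMap.smul_comp, LinearMap.comp_smul, ← smul_sub,
    ← smul_add, ← leibniz_mul_mul_eq_commutator hLL, ← leibniz_flip_mul_eq_add hLL,
    ← leibniz_flip_mul_eq_sub hLL, inv_two_smul_eq_inv_two_smul_inv_two_smul_iff htwo, and_self]

end Flat

theorem mul_mul_eq_zero_and_flip_mul_eq_zero_iff {K A : Type*} [CommRing K] [AddCommGroup A]
    [Module K A] {mul : A →ₗ[K] A →ₗ[K] A} :
    ((∀ u v : A, mul (mul u v) = 0) ∧ ∀ u v : A, mul.flip (mul u v) = 0) ↔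
      ((∀ u v w : A, mul (mul u v) w = 0 ∧ mul u (mul v w) = 0) ∧
        ∀ u v w : A, mul u (mul v w) = mul (mul u v) w - mul (mul u w) v) := by
  simp only [LinearMap.ext_iff, LinearMap.zero_apply, LinearMap.flip_apply]
  refine ⟨fun ⟨hL, hR⟩ => ⟨fun u v w => ⟨hL u v w, hR v w u⟩, fun u v w => ?_⟩,
    fun ⟨h, _⟩ => ⟨fun u v w => (h u v w).1, fun u v w => (h w u v).2⟩⟩
  rw [hL, hL, hR, sub_zero]

/-- A quadratic left Leibniz algebra is flat iff it is a 2-step nilpotent symmetric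
Leibniz algebra. -/
theorem quadratic_flat_iff_twoStepNilpotent_symmetric
    {K A : Type*} [Field K] [AddCommGroup A] [Module K A]
    (htwo : (2 : K) ≠ 0)
    (mul starP circP : A →ₗ[K] A →ₗ[K] A)
    (B : A →ₗ[K] A →ₗ[K] K)
    (hLL : ∀ u v w : A, mul u (mul v w) = mul (mul u v) w + mul v (mul u w))
    (hsymm : ∀ u v : A, B u v = B v u)
    (hnd : ∀ v : A, (∀ u : A, B u v = 0) → v = 0)
    (hinv : ∀ u v w : A, B (mul u v) w = B u (mul v w))
    (htor : ∀ u v : A, mul u v = starP u v + circP v u)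
    (hcomp : ∀ u v w : A, B (starP u v) w = B v (circP u w)) :
    ((∀ u v : A, starP (mul u v) = starP u ∘ₗ starP v - starP v ∘ₗ starP u) ∧
     (∀ u v : A, circP (mul u v) = starP u ∘ₗ circP v + circP v ∘ₗ circP u) ∧
     (∀ u v : A, circP (mul u v) = starP u ∘ₗ circP v - circP v ∘ₗ starP u)) ↔
    ((∀ u v w : A, mul (mul u v) w = 0 ∧ mul u (mul v w) = 0) ∧
     (∀ u v w : A, mul u (mul v w) = mul (mul u v) w - mul (mul u w) v)) := by
  obtain ⟨rfl, rfl⟩ :=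
    starP_circP_eq_half htwo htor (two_smul_starP_eq_mul hsymm hnd hinv htor hcomp)
  exact (isFlat_half_iff htwo hLL).trans mul_mul_eq_zero_and_flip_mul_eq_zero_iff
end

section
/- Let (A, •) be a 2-step nilpotent symmetric Leibniz algebra, and write u•v = [u,v] + {u,v} with [u,v] = (u•v − v•u)/2 and {u,v} = (u•v + v•u)/2. Then ([ , ]) makes A a 2-step nilpotent Lie algebra, ({ , }) makes A a 2-step nilpotent commutative associative algebra, and [u, {v,w}] = {u, [v,w]} = 0 for all u,v,w ∈ A. -/
/-!
Every product `u • v` of a 2-step nilpotent algebra lies in its two-sided annihilator, and hence so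
does every linear combination of `u • v` and `v • u`, in particular `[u, v]` and `{u, v}`. Any such
combination therefore vanishes as soon as one of its two arguments is itself a bracket or a symmetric
product, which gives all the identities except `u • v = [u, v] + {u, v}`, where `2` is inverted.
-/

section TwoSidedAnnihilator

variable {K A : Type*} [CommSemiring K] [AddCommMonoid A] [Module K A]

def twoSidedAnnihilator (mul : A →ₗ[K] A →ₗ[K] A) : Submodule K A :=
  LinearMap.ker mul ⊓ LinearMap.ker mul.flip

variable {mul : A →ₗ[K] A →ₗ[K] A}

lemma mem_twoSidedAnnihilator {x : A} :
    x ∈ twoSidedAnnihilator mul ↔ ∀ w, mul x w = 0 ∧ mul w x = 0 := by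
  simp [twoSidedAnnihilator, LinearMap.ext_iff, forall_and]

variable {f : A → A → A} {c d : K}

lemma map_mem_twoSidedAnnihilator (hf : ∀ u v, f u v = c • mul u v + d • mul v u)
    (hmul : ∀ u v, mul u v ∈ twoSidedAnnihilator mul) (u v : A) :
    f u v ∈ twoSidedAnnihilator mul := by
  rw [hf]
  exact add_mem (Submodule.smul_mem _ c (hmul u v)) (Submodule.smul_mem _ d (hmul v u))

lemma map_eq_zero_of_left_mem_twoSidedAnnihilator
    (hf : ∀ u v, f u v = c • mul u v + d • mul v u) {x : A}
    (hx : x ∈ twoSidedAnnihilator mul) (w : A) : f x w = 0 := by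
  obtain ⟨hxw, hwx⟩ := mem_twoSidedAnnihilator.1 hx w
  rw [hf, hxw, hwx, smul_zero, smul_zero, add_zero]

lemma map_eq_zero_of_right_mem_twoSidedAnnihilator
    (hf : ∀ u v, f u v = c • mul u v + d • mul v u) {x : A}
    (hx : x ∈ twoSidedAnnihilator mul) (w : A) : f w x = 0 := by
  obtain ⟨hxw, hwx⟩ := mem_twoSidedAnnihilator.1 hx w
  rw [hf, hxw, hwx, smul_zero, smul_zero, add_zero]

end TwoSidedAnnihilator

lemma inv_two_smul_sub_add_inv_two_smul_add {K A : Type*} [DivisionRing K] [AddCommGroup A]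
    [Module K A] (htwo : (2 : K) ≠ 0) (a b : A) :
    (2 : K)⁻¹ • (a - b) + (2 : K)⁻¹ • (a + b) = a := by
  rw [← smul_add, sub_add_add_cancel, ← two_smul K a, smul_smul, inv_mul_cancel₀ htwo, one_smul]

theorem twoStepNilpotent_symmetric_decomposition_general
    {K A : Type*} [Field K] [AddCommGroup A] [Module K A]
    (htwo : (2 : K) ≠ 0)
    (mul : A →ₗ[K] A →ₗ[K] A)
    (hnil : ∀ u v w : A, mul (mul u v) w = 0 ∧ mul u (mul v w) = 0)
    (br sq : A → A → A)
    (hbr : ∀ u v : A, br u v = (2 : K)⁻¹ • (mul u v - mul v u))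
    (hsq : ∀ u v : A, sq u v = (2 : K)⁻¹ • (mul u v + mul v u)) :
    (∀ u v : A, mul u v = br u v + sq u v) ∧
    (∀ u v : A, br u v = -(br v u)) ∧
    (∀ u v w : A, br (br u v) w = 0) ∧
    (∀ u v w : A, br (br u v) w + br (br v w) u + br (br w u) v = 0) ∧
    (∀ u v : A, sq u v = sq v u) ∧
    (∀ u v w : A, sq (sq u v) w = sq u (sq v w)) ∧
    (∀ u v w : A, sq (sq u v) w = 0) ∧
    (∀ u v w : A, br u (sq v w) = 0 ∧ sq u (br v w) = 0) := by
  have hmul : ∀ u v, mul u v ∈ twoSidedAnnihilator mul := fun u v =>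
    mem_twoSidedAnnihilator.2 fun w => ⟨(hnil u v w).1, (hnil w u v).2⟩
  have hbr' : ∀ u v, br u v = (2 : K)⁻¹ • mul u v + (-(2 : K)⁻¹) • mul v u := fun u v => by
    rw [hbr, smul_sub, neg_smul, sub_eq_add_neg]
  have hsq' : ∀ u v, sq u v = (2 : K)⁻¹ • mul u v + (2 : K)⁻¹ • mul v u := fun u v => by
    rw [hsq, smul_add]
  have br_br : ∀ u v w, br (br u v) w = 0 := fun u v w =>
    map_eq_zero_of_left_mem_twoSidedAnnihilator hbr' (map_mem_twoSidedAnnihilator hbr' hmul u v) w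
  have sq_sq_left : ∀ u v w, sq (sq u v) w = 0 := fun u v w =>
    map_eq_zero_of_left_mem_twoSidedAnnihilator hsq' (map_mem_twoSidedAnnihilator hsq' hmul u v) w
  have sq_sq_right : ∀ u v w, sq u (sq v w) = 0 := fun u v w =>
    map_eq_zero_of_right_mem_twoSidedAnnihilator hsq' (map_mem_twoSidedAnnihilator hsq' hmul v w) u
  refine ⟨fun u v => ?_, fun u v => ?_, br_br, fun u v w => ?_, fun u v => ?_,
    fun u v w => ?_, sq_sq_left, fun u v w => ⟨?_, ?_⟩⟩
  · rw [hbr, hsq, inv_two_smul_sub_add_inv_two_smul_add htwo]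
  · rw [hbr, hbr, ← smul_neg, neg_sub]
  · rw [br_br, br_br, br_br, add_zero, add_zero]
  · rw [hsq, hsq, add_comm]
  · rw [sq_sq_left, sq_sq_right]
  · exact map_eq_zero_of_right_mem_twoSidedAnnihilator hbr'
      (map_mem_twoSidedAnnihilator hsq' hmul v w) u
  · exact map_eq_zero_of_right_mem_twoSidedAnnihilator hsq'
      (map_mem_twoSidedAnnihilator hbr' hmul v w) u

/-- Decomposition of a 2-step nilpotent symmetric Leibniz algebra into a 2-step
nilpotent Lie algebra and a 2-step nilpotent commutative associative algebra
satisfying the mixed vanishing identities. -/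
theorem twoStepNilpotent_symmetric_decomposition
    {K A : Type*} [Field K] [AddCommGroup A] [Module K A]
    (htwo : (2 : K) ≠ 0)
    (mul : A →ₗ[K] A →ₗ[K] A)
    (hLL : ∀ u v w : A, mul u (mul v w) = mul (mul u v) w + mul v (mul u w))
    (hRL : ∀ u v w : A, mul u (mul v w) = mul (mul u v) w - mul (mul u w) v)
    (hnil : ∀ u v w : A, mul (mul u v) w = 0 ∧ mul u (mul v w) = 0)
    (br sq : A → A → A)
    (hbr : ∀ u v : A, br u v = (2 : K)⁻¹ • (mul u v - mul v u))
    (hsq : ∀ u v : A, sq u v = (2 : K)⁻¹ • (mul u v + mul v u)) :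
    (∀ u v : A, mul u v = br u v + sq u v) ∧
    (∀ u v : A, br u v = -(br v u)) ∧
    (∀ u v w : A, br (br u v) w = 0) ∧
    (∀ u v w : A, br (br u v) w + br (br v w) u + br (br w u) v = 0) ∧
    (∀ u v : A, sq u v = sq v u) ∧
    (∀ u v w : A, sq (sq u v) w = sq u (sq v w)) ∧
    (∀ u v w : A, sq (sq u v) w = 0) ∧
    (∀ u v w : A, br u (sq v w) = 0 ∧ sq u (br v w) = 0) :=
  twoStepNilpotent_symmetric_decomposition_general htwo mul hnil br sq hbr hsq
end

section
/- Let (A, [ , ]) be a 2-step nilpotent Lie algebra and μ: A × A → Z(A) a symmetric bilinear map taking values in the center of A such that μ([u,v], w) = 0 and μ(μ(u,v), w) = 0 for all u,v,w ∈ A. Then the product u•v := [u,v] + μ(u,v) makes A a 2-step nilpotent symmetric Leibniz algebra. -/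
/-! Every product `u • v = [u,v] + μ(u,v)` is annihilated by both `[ , ]` and `μ` from the left,
hence, by antisymmetry of the bracket and symmetry of `μ`, from both sides. So all triple
products vanish, and both Leibniz identities collapse to `0 = 0`. -/

section

variable {R A : Type*} [CommSemiring R] [AddCommGroup A] [Module R A]
  (br μ : A →ₗ[R] A →ₗ[R] A)

theorem bracket_add_apply_left_eq_zero (hnil : ∀ u v w : A, br (br u v) w = 0)
    (hcenter : ∀ u v w : A, br (μ u v) w = 0) (u v w : A) :
    br ((br + μ) u v) w = 0 := by
  simp only [LinearMap.add_apply, map_add, hnil, hcenter, add_zero]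

theorem mu_add_apply_left_eq_zero (hμbr : ∀ u v w : A, μ (br u v) w = 0)
    (hμμ : ∀ u v w : A, μ (μ u v) w = 0) (u v w : A) :
    μ ((br + μ) u v) w = 0 := by
  simp only [LinearMap.add_apply, map_add, hμbr, hμμ, add_zero]

theorem add_apply_eq_zero_of_left {x w : A} (hbr : br x w = 0) (hμ : μ x w = 0) :
    (br + μ) x w = 0 := by
  rw [LinearMap.add_apply, LinearMap.add_apply, hbr, hμ, add_zero]

theorem add_apply_eq_zero_of_right (hanti : ∀ u v : A, br u v = -(br v u))
    (hμsym : ∀ u v : A, μ u v = μ v u) {x w : A} (hbr : br x w = 0) (hμ : μ x w = 0) :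
    (br + μ) w x = 0 := by
  rw [LinearMap.add_apply, LinearMap.add_apply, hanti, hμsym, hbr, hμ, neg_zero, add_zero]

end

theorem lie_plus_mu_symmetric_leibniz_general
    {K A : Type*} [Field K] [AddCommGroup A] [Module K A]
    (br μ : A →ₗ[K] A →ₗ[K] A)
    (hanti : ∀ u v : A, br u v = -(br v u))
    (hnil : ∀ u v w : A, br (br u v) w = 0)
    (hμsym : ∀ u v : A, μ u v = μ v u)
    (hcenter : ∀ u v w : A, br (μ u v) w = 0)
    (hμbr : ∀ u v w : A, μ (br u v) w = 0)
    (hμμ : ∀ u v w : A, μ (μ u v) w = 0)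
    (bullet : A → A → A)
    (hbullet : ∀ u v : A, bullet u v = br u v + μ u v) :
    (∀ u v w : A, bullet u (bullet v w) = bullet (bullet u v) w + bullet v (bullet u w)) ∧
    (∀ u v w : A, bullet u (bullet v w) = bullet (bullet u v) w - bullet (bullet u w) v) ∧
    (∀ u v w : A, bullet (bullet u v) w = 0 ∧ bullet u (bullet v w) = 0) := by
  obtain rfl : bullet = fun u v => (br + μ) u v := by
    funext u v
    exact hbullet u v
  have hbr := bracket_add_apply_left_eq_zero br μ hnil hcenter
  have hμ := mu_add_apply_left_eq_zero br μ hμbr hμμ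
  have left_zero : ∀ u v w : A, (br + μ) ((br + μ) u v) w = 0 := fun u v w =>
    add_apply_eq_zero_of_left br μ (hbr u v w) (hμ u v w)
  have right_zero : ∀ u v w : A, (br + μ) u ((br + μ) v w) = 0 := fun u v w =>
    add_apply_eq_zero_of_right br μ hanti hμsym (hbr v w u) (hμ v w u)
  refine ⟨fun u v w => ?_, fun u v w => ?_, fun u v w => ⟨left_zero u v w, right_zero u v w⟩⟩
  · dsimp only
    rw [right_zero, left_zero, right_zero, add_zero]
  · dsimp only
    rw [right_zero, left_zero, left_zero, sub_zero]

/-- A 2-step nilpotent Lie algebra together with a center-valued symmetric bilinear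
map μ with μ([u,v],w) = μ(μ(u,v),w) = 0 gives a 2-step nilpotent symmetric
Leibniz algebra via u•v = [u,v] + μ(u,v). -/
theorem lie_plus_mu_symmetric_leibniz
    {K A : Type*} [Field K] [AddCommGroup A] [Module K A]
    (br μ : A →ₗ[K] A →ₗ[K] A)
    (hanti : ∀ u v : A, br u v = -(br v u))
    (hjac : ∀ u v w : A, br (br u v) w + br (br v w) u + br (br w u) v = 0)
    (hnil : ∀ u v w : A, br (br u v) w = 0)
    (hμsym : ∀ u v : A, μ u v = μ v u)
    (hcenter : ∀ u v w : A, br (μ u v) w = 0)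
    (hμbr : ∀ u v w : A, μ (br u v) w = 0)
    (hμμ : ∀ u v w : A, μ (μ u v) w = 0)
    (bullet : A → A → A)
    (hbullet : ∀ u v : A, bullet u v = br u v + μ u v) :
    (∀ u v w : A, bullet u (bullet v w) = bullet (bullet u v) w + bullet v (bullet u w)) ∧
    (∀ u v w : A, bullet u (bullet v w) = bullet (bullet u v) w - bullet (bullet u w) v) ∧
    (∀ u v w : A, bullet (bullet u v) w = 0 ∧ bullet u (bullet v w) = 0) :=
  lie_plus_mu_symmetric_leibniz_general br μ hanti hnil hμsym hcenter hμbr hμμ bullet hbullet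
end

section
/- Let (A, •, ⟨ , ⟩) be a pseudo-Euclidean 2-step nilpotent symmetric Leibniz algebra obtained from a Lie algebra (A, [ , ]) by u•v = [u,v] + μ(u,v), where μ is a symmetric bilinear map valued in the center with μ([u,v],w) = μ(μ(u,v),w) = 0. Then ⟨ , ⟩ is invariant for • if and only if ⟨ , ⟩ is invariant for [ , ] and there exist a symmetric trilinear form T: A×A×A → K and a totally isotropic subspace J ⊆ Z(A) with T(J^⊥, ·, ·) = 0 and ⟨μ(u,v), w⟩ = T(u,v,w) for all u,v,w. -/
/-!
Since ⟨ , ⟩ is symmetric, invariance of u • v = [u,v] + μ(u,v) splits into invariance of the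
antisymmetric part [ , ] and of the symmetric part μ (comparing the three instances of the
identity obtained by swapping arguments isolates the μ-terms, at the cost of a factor 2).
For symmetric μ, invariance says precisely that T(u,v,w) = ⟨μ(u,v), w⟩ is a symmetric
trilinear form. The subspace J is then the span of the values of μ: it is central because μ
is, totally isotropic because μ(μ(u,v), w) = 0, and T(x,v,w) = ⟨x, μ(v,w)⟩ vanishes on J^⊥.
-/

namespace LinearMap.BilinForm

variable {K A : Type*} [Field K] [AddCommGroup A] [Module K A] (B : LinearMap.BilinForm K A)

def IsInvariantFor (m : A →ₗ[K] A →ₗ[K] A) : Prop :=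
  ∀ u v w, B (m u v) w = B u (m v w)

variable {B}

theorem IsInvariantFor.add {a s : A →ₗ[K] A →ₗ[K] A} (ha : IsInvariantFor B a)
    (hs : IsInvariantFor B s) : IsInvariantFor B (a + s) := by
  intro u v w
  simp only [LinearMap.add_apply, map_add, ha u v w, hs u v w]

theorem IsInvariantFor.of_add_of_antisymm_of_symm (htwo : (2 : K) ≠ 0)
    (hB : ∀ u v, B u v = B v u) {a s : A →ₗ[K] A →ₗ[K] A}
    (ha : ∀ u v, a u v = -a v u) (hs : ∀ u v, s u v = s v u)
    (h : IsInvariantFor B (a + s)) : IsInvariantFor B s := by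
  have hcyc : ∀ u v w, B (a u v) w + B (s u v) w = B (a v w) u + B (s v w) u := by
    intro u v w
    simpa only [LinearMap.add_apply, map_add, hB u] using h u v w
  intro u v w
  rw [hB u]
  have e₁ := hcyc u v w
  have e₂ := hcyc v u w
  have e₃ := hcyc u w v
  rw [ha v u, hs v u, map_neg, LinearMap.neg_apply] at e₂
  rw [ha w v, hs w v, map_neg, LinearMap.neg_apply] at e₃
  exact mul_left_cancel₀ htwo (by linear_combination e₁ + e₂ + e₃)

theorem isInvariantFor_add_iff (htwo : (2 : K) ≠ 0) (hB : ∀ u v, B u v = B v u)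
    {a s : A →ₗ[K] A →ₗ[K] A} (ha : ∀ u v, a u v = -a v u) (hs : ∀ u v, s u v = s v u) :
    IsInvariantFor B (a + s) ↔ IsInvariantFor B a ∧ IsInvariantFor B s := by
  refine ⟨fun h => ?_, fun h => h.1.add h.2⟩
  have hs' := h.of_add_of_antisymm_of_symm htwo hB ha hs
  refine ⟨fun u v w => ?_, hs'⟩
  simpa only [LinearMap.add_apply, map_add, hs' u v w, add_left_inj] using h u v w

theorem IsInvariantFor.compr₂_swap {s : A →ₗ[K] A →ₗ[K] A} (hs : ∀ u v, s u v = s v u)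
    (h : IsInvariantFor B s) (u v w : A) : s.compr₂ B u v w = s.compr₂ B u w v := by
  simp only [LinearMap.compr₂_apply, h u v w, h u w v, hs v w]

theorem isInvariantFor_of_eq_symmetric_trilinear (hB : ∀ u v, B u v = B v u)
    {s : A →ₗ[K] A →ₗ[K] A} (T : A →ₗ[K] A →ₗ[K] A →ₗ[K] K)
    (hT₁₂ : ∀ u v w, T u v w = T v u w) (hT₂₃ : ∀ u v w, T u v w = T u w v)
    (hsT : ∀ u v w, B (s u v) w = T u v w) : IsInvariantFor B s := by
  intro u v w
  rw [hB u, hsT, hsT, hT₁₂, hT₂₃]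

theorem IsInvariantFor.map₂_le_orthogonal (hB : ∀ u v, B u v = B v u)
    {s : A →ₗ[K] A →ₗ[K] A} (hs : ∀ u v, s u v = s v u) (h : IsInvariantFor B s)
    (hss : ∀ u v w, s (s u v) w = 0) :
    Submodule.map₂ s ⊤ ⊤ ≤ B.orthogonal (Submodule.map₂ s ⊤ ⊤) := by
  have hker : Submodule.map₂ s ⊤ ⊤ ≤ LinearMap.ker s :=
    Submodule.map₂_le.2 fun u _ v _ => LinearMap.ext (hss u v)
  refine Submodule.map₂_le.2 fun u _ v _ => mem_orthogonal_iff.2 fun x hx => ?_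
  have hsx : s x = 0 := hker hx
  rw [hB, h, hs, hsx, LinearMap.zero_apply, map_zero]

theorem IsInvariantFor.compr₂_eq_zero_of_mem_orthogonal (hB : ∀ u v, B u v = B v u)
    {s : A →ₗ[K] A →ₗ[K] A} (h : IsInvariantFor B s) {x : A}
    (hx : x ∈ B.orthogonal (Submodule.map₂ s ⊤ ⊤)) (v w : A) : s.compr₂ B x v w = 0 := by
  rw [LinearMap.compr₂_apply, h, hB]
  exact hx _ (Submodule.apply_mem_map₂ s trivial trivial)

end LinearMap.BilinForm

open LinearMap.BilinForm in
theorem invariance_characterization_twoStep_general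
    {K A : Type*} [Field K] [AddCommGroup A] [Module K A]
    (htwo : (2 : K) ≠ 0)
    (br μ : A →ₗ[K] A →ₗ[K] A)
    (hanti : ∀ u v : A, br u v = -(br v u))
    (hμsym : ∀ u v : A, μ u v = μ v u)
    (hcenter : ∀ u v w : A, br (μ u v) w = 0)
    (hμμ : ∀ u v w : A, μ (μ u v) w = 0)
    (bullet : A → A → A)
    (hbullet : ∀ u v : A, bullet u v = br u v + μ u v)
    (B : LinearMap.BilinForm K A)
    (hsymm : ∀ u v : A, B u v = B v u) :
    (∀ u v w : A, B (bullet u v) w = B u (bullet v w)) ↔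
    ((∀ u v w : A, B (br u v) w = B u (br v w)) ∧
     ∃ (T : A →ₗ[K] A →ₗ[K] A →ₗ[K] K) (J : Submodule K A),
       (∀ u v w : A, T u v w = T v u w) ∧
       (∀ u v w : A, T u v w = T u w v) ∧
       (∀ z ∈ J, ∀ u : A, br z u = 0) ∧
       (∀ x ∈ J, ∀ y ∈ J, B x y = 0) ∧
       (∀ x ∈ B.orthogonal J, ∀ v w : A, T x v w = 0) ∧
       (∀ u v w : A, B (μ u v) w = T u v w)) := by
  obtain rfl : bullet = fun u v => (br + μ) u v := funext₂ hbullet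
  change IsInvariantFor B (br + μ) ↔ IsInvariantFor B br ∧ _
  rw [isInvariantFor_add_iff htwo hsymm hanti hμsym]
  constructor
  · rintro ⟨hbr, hμ⟩
    have hcentral : Submodule.map₂ μ ⊤ ⊤ ≤ LinearMap.ker br :=
      Submodule.map₂_le.2 fun u _ v _ => LinearMap.ext (hcenter u v)
    refine ⟨hbr, μ.compr₂ B, Submodule.map₂ μ ⊤ ⊤, fun u v w => congrArg (B · w) (hμsym u v),
      hμ.compr₂_swap hμsym, fun z hz => LinearMap.ext_iff.1 (hcentral hz),
      fun x hx y hy => hμ.map₂_le_orthogonal hsymm hμsym hμμ hy x hx,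
      fun x hx => hμ.compr₂_eq_zero_of_mem_orthogonal hsymm hx, fun _ _ _ => rfl⟩
  · rintro ⟨hbr, T, -, hT₁₂, hT₂₃, -, -, -, hμT⟩
    exact ⟨hbr, isInvariantFor_of_eq_symmetric_trilinear hsymm T hT₁₂ hT₂₃ hμT⟩

/-- Characterization of invariance of the bilinear form on a pseudo-Euclidean 2-step
nilpotent symmetric Leibniz algebra obtained from a Lie algebra by means of μ. -/
theorem invariance_characterization_twoStep
    {K A : Type*} [Field K] [AddCommGroup A] [Module K A]
    (htwo : (2 : K) ≠ 0)
    (br μ : A →ₗ[K] A →ₗ[K] A)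
    (hanti : ∀ u v : A, br u v = -(br v u))
    (hjac : ∀ u v w : A, br (br u v) w + br (br v w) u + br (br w u) v = 0)
    (hnil : ∀ u v w : A, br (br u v) w = 0)
    (hμsym : ∀ u v : A, μ u v = μ v u)
    (hcenter : ∀ u v w : A, br (μ u v) w = 0)
    (hμbr : ∀ u v w : A, μ (br u v) w = 0)
    (hμμ : ∀ u v w : A, μ (μ u v) w = 0)
    (bullet : A → A → A)
    (hbullet : ∀ u v : A, bullet u v = br u v + μ u v)
    (B : LinearMap.BilinForm K A)
    (hsymm : ∀ u v : A, B u v = B v u)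
    (hnd : ∀ v : A, (∀ u : A, B u v = 0) → v = 0) :
    (∀ u v w : A, B (bullet u v) w = B u (bullet v w)) ↔
    ((∀ u v w : A, B (br u v) w = B u (br v w)) ∧
     ∃ (T : A →ₗ[K] A →ₗ[K] A →ₗ[K] K) (J : Submodule K A),
       (∀ u v w : A, T u v w = T v u w) ∧
       (∀ u v w : A, T u v w = T u w v) ∧
       (∀ z ∈ J, ∀ u : A, br z u = 0) ∧
       (∀ x ∈ J, ∀ y ∈ J, B x y = 0) ∧
       (∀ x ∈ B.orthogonal J, ∀ v w : A, T x v w = 0) ∧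
       (∀ u v w : A, B (μ u v) w = T u v w)) :=
  invariance_characterization_twoStep_general htwo br μ hanti hμsym hcenter hμμ bullet hbullet B
    hsymm
end

section
/- Let h be a finite-dimensional vector space (viewed as a trivial algebra) and Ω: h × h → h* a bilinear map satisfying the cyclicity condition Ω(u,v)(w) = Ω(v,w)(u) for all u,v,w ∈ h. Define on A = h ⊕ h* the product (u+f)•(v+g) := Ω(u,v) and the bilinear form B(u+f, v+g) := f(v) + g(u). Then (A, •) is a 2-step nilpotent symmetric Leibniz algebra and B is a nondegenerate symmetric invariant bilinear form on A. -/
/-!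
Every product lands in the summand `h*`, on which the product vanishes since it only sees the
`h`-components; so all triple products are zero and both Leibniz identities read `0 = 0 + 0`.
`B` is the canonical pairing of `h` with `h*`, hence symmetric, and nondegenerate because the dual
of a vector space separates points. Invariance is exactly the cyclicity of `Ω`:
`B(x•y, z) = Ω(x,y)(z)` and `B(x, y•z) = Ω(y,z)(x)`.
-/

namespace TStarExtension

variable {R M : Type*} [CommSemiring R] [AddCommMonoid M] [Module R M]

def mul (Ω : M →ₗ[R] M →ₗ[R] Module.Dual R M) (x y : M × Module.Dual R M) :
    M × Module.Dual R M :=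
  (0, Ω x.1 y.1)

def pairing (x y : M × Module.Dual R M) : R :=
  x.2 y.1 + y.2 x.1

variable (Ω : M →ₗ[R] M →ₗ[R] Module.Dual R M)

@[simp]
theorem mul_mul_left (x y z : M × Module.Dual R M) : mul Ω (mul Ω x y) z = 0 := by
  simp [mul]

@[simp]
theorem mul_mul_right (x y z : M × Module.Dual R M) : mul Ω x (mul Ω y z) = 0 := by
  simp [mul]

theorem pairing_comm (x y : M × Module.Dual R M) : pairing x y = pairing y x :=
  add_comm _ _

theorem eq_zero_of_forall_pairing_eq_zero [Module.Projective R M] {x : M × Module.Dual R M}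
    (hx : ∀ y, pairing x y = 0) : x = 0 := by
  have hdual : x.2 = 0 := LinearMap.ext fun v ↦ by simpa [pairing] using hx (v, 0)
  have hvec : x.1 = 0 :=
    (Module.forall_dual_apply_eq_zero_iff R x.1).mp fun g ↦ by simpa [pairing] using hx (0, g)
  exact Prod.ext hvec hdual

theorem pairing_mul_left_eq_pairing_mul_right (hcyc : ∀ u v w : M, Ω u v w = Ω v w u)
    (x y z : M × Module.Dual R M) : pairing (mul Ω x y) z = pairing x (mul Ω y z) := by
  simp [pairing, mul, hcyc x.1 y.1 z.1]

end TStarExtension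

theorem Tstar_extension_trivial_algebra_general
    {K H : Type*} [Field K] [AddCommGroup H] [Module K H]
    (Ω : H →ₗ[K] H →ₗ[K] Module.Dual K H)
    (hcyc : ∀ u v w : H, Ω u v w = Ω v w u)
    (mul : (H × Module.Dual K H) → (H × Module.Dual K H) → (H × Module.Dual K H))
    (hmul : ∀ x y, mul x y = (0, Ω x.1 y.1))
    (Bf : (H × Module.Dual K H) → (H × Module.Dual K H) → K)
    (hB : ∀ x y, Bf x y = x.2 y.1 + y.2 x.1) :
    (∀ x y z, mul x (mul y z) = mul (mul x y) z + mul y (mul x z)) ∧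
    (∀ x y z, mul x (mul y z) = mul (mul x y) z - mul (mul x z) y) ∧
    (∀ x y z, mul (mul x y) z = 0 ∧ mul x (mul y z) = 0) ∧
    (∀ x y, Bf x y = Bf y x) ∧
    (∀ x, (∀ y, Bf x y = 0) → x = 0) ∧
    (∀ x y z, Bf (mul x y) z = Bf x (mul y z)) := by
  obtain rfl : mul = TStarExtension.mul Ω := funext₂ hmul
  obtain rfl : Bf = TStarExtension.pairing := funext₂ hB
  refine ⟨fun x y z ↦ by simp, fun x y z ↦ by simp, fun x y z ↦ ⟨by simp, by simp⟩,
    TStarExtension.pairing_comm, fun x ↦ TStarExtension.eq_zero_of_forall_pairing_eq_zero,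
    TStarExtension.pairing_mul_left_eq_pairing_mul_right Ω hcyc⟩

/-- The T*-extension of a trivial algebra h by a cyclic bilinear map Ω : h×h → h* is a
2-step nilpotent symmetric Leibniz algebra with a nondegenerate symmetric invariant
bilinear form. -/
theorem Tstar_extension_trivial_algebra
    {K H : Type*} [Field K] [AddCommGroup H] [Module K H] [FiniteDimensional K H]
    (Ω : H →ₗ[K] H →ₗ[K] Module.Dual K H)
    (hcyc : ∀ u v w : H, Ω u v w = Ω v w u)
    (mul : (H × Module.Dual K H) → (H × Module.Dual K H) → (H × Module.Dual K H))
    (hmul : ∀ x y, mul x y = (0, Ω x.1 y.1))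
    (Bf : (H × Module.Dual K H) → (H × Module.Dual K H) → K)
    (hB : ∀ x y, Bf x y = x.2 y.1 + y.2 x.1) :
    (∀ x y z, mul x (mul y z) = mul (mul x y) z + mul y (mul x z)) ∧
    (∀ x y z, mul x (mul y z) = mul (mul x y) z - mul (mul x z) y) ∧
    (∀ x y z, mul (mul x y) z = 0 ∧ mul x (mul y z) = 0) ∧
    (∀ x y, Bf x y = Bf y x) ∧
    (∀ x, (∀ y, Bf x y = 0) → x = 0) ∧
    (∀ x y z, Bf (mul x y) z = Bf x (mul y z)) :=
  Tstar_extension_trivial_algebra_general Ω hcyc mul hmul Bf hB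
end

section
/- Let (A, •, ⟨ , ⟩) be a finite-dimensional reduced quadratic 2-step nilpotent symmetric Leibniz algebra (reduced means A ≠ 0 and Ann(A, •) is totally isotropic). Then A•A = Ann(A, •), dim A is even, and choosing a totally isotropic complement h of Ann(A, •), the algebra (A, •, ⟨ , ⟩) is isometrically isomorphic to the T*-extension of the trivial algebra h by the nondegenerate cyclic bilinear map Ω: h × h → h*, Ω(u,v)(w) := ⟨u•v, w⟩. -/
/-- Every reduced quadratic 2-step nilpotent symmetric Leibniz algebra satisfies
A•A = Ann(A), has even dimension, and is isometrically isomorphic to the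
T*-extension of any totally isotropic complement h of Ann(A) by
Ω(u,v)(w) = ⟨u•v, w⟩. -/
theorem reduced_quadratic_twoStep_is_Tstar_extension
    {K A : Type*} [Field K] [AddCommGroup A] [Module K A] [FiniteDimensional K A]
    [Nontrivial A]
    (mul : A →ₗ[K] A →ₗ[K] A)
    (hLL : ∀ u v w : A, mul u (mul v w) = mul (mul u v) w + mul v (mul u w))
    (hRL : ∀ u v w : A, mul u (mul v w) = mul (mul u v) w - mul (mul u w) v)
    (hnil : ∀ u v w : A, mul (mul u v) w = 0 ∧ mul u (mul v w) = 0)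
    (B : LinearMap.BilinForm K A)
    (hsymm : ∀ u v : A, B u v = B v u)
    (hnd : ∀ v : A, (∀ u : A, B u v = 0) → v = 0)
    (hinv : ∀ u v w : A, B (mul u v) w = B u (mul v w))
    (Ann : Submodule K A)
    (hAnn : ∀ a : A, a ∈ Ann ↔ ∀ u : A, mul a u = 0 ∧ mul u a = 0)
    (hiso : ∀ x ∈ Ann, ∀ y ∈ Ann, B x y = 0) :
    Submodule.span K {x : A | ∃ u v : A, x = mul u v} = Ann ∧
    Even (Module.finrank K A) ∧
    ∀ (hs : Submodule K A),
      (∀ x ∈ hs, ∀ y ∈ hs, B x y = 0) →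
      IsCompl hs Ann →
      ∃ φ : A ≃ₗ[K] (hs × Module.Dual K hs),
        (∀ x y : A,
          (φ (mul x y)).1 = 0 ∧
          ∀ w : hs, (φ (mul x y)).2 w
            = B (mul ((φ x).1 : A) ((φ y).1 : A)) (w : A)) ∧
        (∀ x y : A, B x y = (φ x).2 (φ y).1 + (φ y).2 (φ x).1) := by
  set S : Submodule K A := Submodule.span K {x : A | ∃ u v : A, x = mul u v} with hSdef
  have hrefl : B.IsRefl := fun x y h => by rw [hsymm]; exact h
  have hndB : B.Nondegenerate := ⟨fun m h => hnd m fun u => (hsymm u m).trans (h u), fun m h => hnd m h⟩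
  have hmulmem : ∀ u v : A, mul u v ∈ Ann := fun u v =>
    (hAnn _).mpr fun w => ⟨(hnil u v w).1, (hnil w u v).2⟩
  have hSAnn : S ≤ Ann := Submodule.span_le.mpr (by
    rintro x ⟨u, v, rfl⟩; exact hmulmem u v)
  have hAnnOrth : Ann = B.orthogonal S := by
    apply le_antisymm
    · intro a ha n hn
      exact hiso n (hSAnn hn) a ha
    · intro a ha
      have key : ∀ u : A, mul a u = 0 := by
        intro u
        apply hnd
        intro v
        rw [hsymm, hinv a u v, hsymm]
        exact ha _ (Submodule.subset_span ⟨u, v, rfl⟩)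
      rw [hAnn]
      intro u
      refine ⟨key u, ?_⟩
      apply hnd
      intro v
      rw [hsymm, hinv u a v, key v, map_zero]
  have hSeq : S = Ann := by
    refine le_antisymm hSAnn ?_
    have horth : B.orthogonal Ann = S := by
      rw [hAnnOrth]
      exact LinearMap.BilinForm.orthogonal_orthogonal hndB hrefl S
    intro a ha
    rw [← horth]
    intro n hn
    exact hiso n hn a ha
  have horthAnn : B.orthogonal Ann = Ann := by
    refine (congrArg B.orthogonal hAnnOrth).trans ?_
    rw [LinearMap.BilinForm.orthogonal_orthogonal hndB hrefl S, hSeq]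
  have hdim2 : Module.finrank K Ann + Module.finrank K Ann = Module.finrank K A := by
    have h1 := LinearMap.BilinForm.finrank_orthogonal hndB Ann
    rw [horthAnn] at h1
    have h2 : Module.finrank K Ann ≤ Module.finrank K A := Submodule.finrank_le Ann
    omega
  refine ⟨hSeq, ⟨Module.finrank K Ann, hdim2.symm⟩, ?_⟩
  intro hs hsiso hcompl
  set π := hs.projectionOnto Ann hcompl with hπdef
  set ρ := Ann.projectionOnto hs hcompl.symm with hρdef
  have decomp : ∀ x : A, ((π x : A) + (ρ x : A)) = x := fun x =>
    Submodule.projection_add_projection_eq_self hcompl x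
  set D : A →ₗ[K] Module.Dual K hs :=
    (B.compl₂ hs.subtype).comp (Ann.subtype.comp ρ) with hDdef
  have hD : ∀ (a : A) (w : hs), D a w = B (ρ a : A) (w : A) := fun a w => rfl
  set L : A →ₗ[K] hs × Module.Dual K hs := LinearMap.prod π D with hLdef
  have hinj : Function.Injective L := by
    rw [← LinearMap.ker_eq_bot]
    rw [Submodule.eq_bot_iff]
    intro a ha
    rw [LinearMap.mem_ker] at ha
    have hπa : π a = 0 := congrArg Prod.fst ha
    have hDa : D a = 0 := congrArg Prod.snd ha
    apply hnd
    intro u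
    rw [hsymm]
    calc B a u = B ((π a : A) + (ρ a : A)) ((π u : A) + (ρ u : A)) := by
          rw [decomp, decomp]
      _ = B (ρ a : A) (π u : A) + B (ρ a : A) (ρ u : A) := by
          rw [hπa]; simp
      _ = 0 := by
          rw [← hD a (π u), hDa, hiso _ (ρ a).2 _ (ρ u).2]
          simp
  have hfr : Module.finrank K hs = Module.finrank K Ann := by
    have := Submodule.finrank_add_eq_of_isCompl hcompl
    omega
  have hdim : Module.finrank K A = Module.finrank K (hs × Module.Dual K hs) := by
    rw [Module.finrank_prod, Subspace.dual_finrank_eq, hfr]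
    omega
  have hsurj : Function.Surjective L :=
    (LinearMap.injective_iff_surjective_of_finrank_eq_finrank hdim).mp hinj
  refine ⟨LinearEquiv.ofBijective L ⟨hinj, hsurj⟩, ?_, ?_⟩
  · intro x y
    have hmem := hmulmem x y
    have hπ0 : π (mul x y) = 0 :=
      (Submodule.projectionOnto_apply_eq_zero_iff hcompl).mpr hmem
    have hρ : ρ (mul x y) = ⟨mul x y, hmem⟩ := by
      have := Submodule.projectionOnto_apply_left hcompl.symm (⟨mul x y, hmem⟩ : Ann)
      exact this
    have hmuleq : mul x y = mul (π x : A) (π y : A) := by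
      conv_lhs => rw [← decomp x, ← decomp y]
      simp only [map_add, LinearMap.add_apply]
      rw [((hAnn _).mp (ρ x).2 _).1, ((hAnn _).mp (ρ y).2 _).2,
        ((hAnn _).mp (ρ y).2 _).2]
      simp
    refine ⟨?_, ?_⟩
    · exact hπ0
    · intro w
      have : (LinearEquiv.ofBijective L ⟨hinj, hsurj⟩ (mul x y)).2 w
          = B (ρ (mul x y) : A) (w : A) := rfl
      rw [this, hρ]
      show B (mul x y) (w : A) = _
      conv_lhs => rw [hmuleq]
      rfl
  · intro x y
    show B x y = B (ρ x : A) (π y : A) + B (ρ y : A) (π x : A)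
    calc B x y = B ((π x : A) + (ρ x : A)) ((π y : A) + (ρ y : A)) := by
          rw [decomp, decomp]
      _ = B (π x : A) (π y : A) + B (π x : A) (ρ y : A)
          + (B (ρ x : A) (π y : A) + B (ρ x : A) (ρ y : A)) := by
          simp only [map_add, LinearMap.add_apply]
          ring
      _ = B (ρ x : A) (π y : A) + B (ρ y : A) (π x : A) := by
          rw [hsiso _ (π x).2 _ (π y).2, hiso _ (ρ x).2 _ (ρ y).2,
            hsymm (π x : A) (ρ y : A)]
          ring
end

section
/- Let (A, ⋆, ∘) be a pre-left Leibniz algebra and let • be the associated left Leibniz product u•v = u⋆v + v∘u. Then the pair of maps u ↦ L⋆_u and u ↦ L∘_u satisfies: L⋆_{u•v} = [L⋆_u, L⋆_v], L∘_{u•v} = L⋆_u∘L∘_v + L∘_v∘L∘_u, and L∘_{u•v} = [L⋆_u, L∘_v], for all u,v ∈ A (i.e., (L⋆, L∘) is a left representation of (A, •) on A). -/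
/-! Evaluated at `w`, the first two identities are exactly axioms (1) and (2). The third is the
second rewritten with axiom (3), which says `L∘_v ∘ L∘_u = -(L∘_v ∘ L⋆_u)`. -/

namespace PreLeftLeibniz

variable {R M : Type*} [CommSemiring R] [AddCommGroup M] [Module R M]
  (starP circP : M →ₗ[R] M →ₗ[R] M)

def leibnizMul (u v : M) : M := starP u v + circP v u

variable {starP circP}

theorem starP_leibnizMul
    (h1 : ∀ u v w : M, starP (starP u v) w - starP u (starP v w)
      = -(starP (circP v u) w + starP v (starP u w)))
    (u v : M) :
    starP (leibnizMul starP circP u v) = starP u ∘ₗ starP v - starP v ∘ₗ starP u := by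
  ext w
  simp only [leibnizMul, map_add, LinearMap.add_apply, LinearMap.sub_apply, LinearMap.comp_apply]
  linear_combination (norm := abel) h1 u v w

theorem circP_leibnizMul_eq_add
    (h2 : ∀ u v w : M, circP (starP u v) w - starP u (circP v w)
      = -(circP (circP v u) w - circP v (circP u w)))
    (u v : M) :
    circP (leibnizMul starP circP u v) = starP u ∘ₗ circP v + circP v ∘ₗ circP u := by
  ext w
  simp only [leibnizMul, map_add, LinearMap.add_apply, LinearMap.comp_apply]
  linear_combination (norm := abel) h2 u v w

theorem circP_comp_circP (h3 : ∀ u v w : M, circP u (circP v w) = -(circP u (starP v w)))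
    (u v : M) : circP u ∘ₗ circP v = -(circP u ∘ₗ starP v) :=
  LinearMap.ext (h3 u v)

end PreLeftLeibniz

open PreLeftLeibniz in
/-- For a pre-left Leibniz algebra, (L⋆, L∘) is a left representation of the
associated left Leibniz algebra on itself. -/
theorem preLeibniz_left_representation
    {K A : Type*} [Field K] [AddCommGroup A] [Module K A]
    (starP circP : A →ₗ[K] A →ₗ[K] A)
    (h1 : ∀ u v w : A,
      starP (starP u v) w - starP u (starP v w)
        = -(starP (circP v u) w + starP v (starP u w)))
    (h2 : ∀ u v w : A,
      circP (starP u v) w - starP u (circP v w)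
        = -(circP (circP v u) w - circP v (circP u w)))
    (h3 : ∀ u v w : A, circP u (circP v w) = -(circP u (starP v w)))
    (bullet : A → A → A)
    (hbullet : ∀ u v : A, bullet u v = starP u v + circP v u) :
    (∀ u v : A, starP (bullet u v) = starP u ∘ₗ starP v - starP v ∘ₗ starP u) ∧
    (∀ u v : A, circP (bullet u v) = starP u ∘ₗ circP v + circP v ∘ₗ circP u) ∧
    (∀ u v : A, circP (bullet u v) = starP u ∘ₗ circP v - circP v ∘ₗ starP u) := by
  obtain rfl : bullet = leibnizMul starP circP := funext₂ hbullet
  refine ⟨starP_leibnizMul h1, circP_leibnizMul_eq_add h2, fun u v => ?_⟩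
  rw [circP_leibnizMul_eq_add h2, circP_comp_circP h3, sub_eq_add_neg]
end
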